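/- arXiv:1106.0811 — 8 statements merged into one kernel-verified Lean document; each statement's English description precedes it below -/
import Mathlib

section
/- For any finite simple graph G with nonempty vertex set, M(G × K₂) = M(G), where G × K₂ denotes the bipartite double cover of G. -/
-- `lamMax G`: the largest eigenvalue of the adjacency matrix of `G`.
open Classical in
noncomputable def lamMax {V : Type*} [Fintype V] (G : SimpleGraph V) : ℝ :=
  sSup (spectrum ℝ (G.adjMatrix ℝ))

-- `eXY G X Y = e(X,Y)`: the number of ordered pairs `(x,y) ∈ X × Y` with `x` adjacent to `y`.
open Classical in
noncomputable def eXY {V : Type*} (G : SimpleGraph V) (X Y : Finset V) : ℕ :=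
  ((X ×ˢ Y).filter fun p => G.Adj p.1 p.2).card

/-- `M(G)`: the maximum of `e(X,Y)/√(|X||Y|)` over nonempty `X, Y ⊆ V`. -/
noncomputable def MG {V : Type*} (G : SimpleGraph V) : ℝ :=
  sSup {r : ℝ | ∃ X Y : Finset V, X.Nonempty ∧ Y.Nonempty ∧
    r = (eXY G X Y : ℝ) / Real.sqrt ((X.card : ℝ) * (Y.card : ℝ))}

/-- The bipartite double cover `G × K₂` of `G`: vertices `(v, i)` with `v ∈ V`,
`i ∈ {0,1}`, and `(u,i)` adjacent to `(v,j)` iff `u ~ v` in `G` and `i ≠ j`. -/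
def doubleCover {V : Type*} (G : SimpleGraph V) : SimpleGraph (V × Bool) where
  Adj a b := G.Adj a.1 b.1 ∧ a.2 ≠ b.2
  symm := ⟨fun _ _ h => ⟨h.1.symm, Ne.symm h.2⟩⟩
  loopless := ⟨fun _ h => h.2 rfl⟩

/-! A vertex set of `G × K₂` is `X₀ × {0} ∪ X₁ × {1}`, and its edges to `Y₀ × {0} ∪ Y₁ × {1}` are
the edges of `G` from `X₀` to `Y₁` and from `X₁` to `Y₀`. So if `e_G(A,B) ≤ m √(|A||B|)` for all
`A, B`, then by Cauchy–Schwarz `e(X,Y) ≤ m (√(|X₀||Y₁|) + √(|X₁||Y₀|)) ≤ m √(|X||Y|)`; conversely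
`X × {0}` and `Y × {1}` realise every ratio of `G` in the double cover. Arguing with nonnegative
upper bounds of the ratio sets rather than with maxima also covers infinite `V`, where the ratios
may be unbounded and both suprema take the junk value `0`. -/

lemma Real.sqrt_mul_add_sqrt_mul_le {a b c d : ℝ} (ha : 0 ≤ a) (hb : 0 ≤ b) (hc : 0 ≤ c)
    (hd : 0 ≤ d) : √(a * d) + √(b * c) ≤ √((a + b) * (c + d)) := by
  have h := Real.sum_sqrt_mul_sqrt_le Finset.univ (f := ![a, b]) (g := ![d, c])
    (fun i => by fin_cases i <;> assumption) (fun i => by fin_cases i <;> assumption)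
  simpa [Fin.sum_univ_two, ← Real.sqrt_mul, ha, hb, add_nonneg ha hb, add_comm d c] using h

theorem Finset.exists_eq_product_false_union_product_true {V : Type*} [DecidableEq V]
    (X : Finset (V × Bool)) : ∃ X₀ X₁ : Finset V, X = X₀ ×ˢ {false} ∪ X₁ ×ˢ {true} := by
  refine ⟨X.preimage (·, false) (Prod.mk_left_injective false).injOn,
    X.preimage (·, true) (Prod.mk_left_injective true).injOn, ?_⟩
  ext ⟨v, b⟩
  cases b <;> simp

theorem Finset.card_product_false_union_product_true {V : Type*} [DecidableEq V]
    (X₀ X₁ : Finset V) : (X₀ ×ˢ {false} ∪ X₁ ×ˢ {true}).card = X₀.card + X₁.card := by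
  rw [card_union_of_disjoint (disjoint_product.2 (Or.inr (by simp)))]
  simp

section eXY

variable {V : Type*} (G : SimpleGraph V)

theorem eXY_le_card_mul_card (X Y : Finset V) : eXY G X Y ≤ X.card * Y.card := by
  classical
  exact (Finset.card_filter_le _ _).trans_eq (Finset.card_product X Y)

@[simp]
theorem eXY_empty_left (Y : Finset V) : eXY G ∅ Y = 0 := by
  simpa using eXY_le_card_mul_card G ∅ Y

@[simp]
theorem eXY_empty_right (X : Finset V) : eXY G X ∅ = 0 := by
  simpa using eXY_le_card_mul_card G X ∅

theorem eXY_union_left [DecidableEq V] {X X' : Finset V} (h : Disjoint X X') (Y : Finset V) :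
    eXY G (X ∪ X') Y = eXY G X Y + eXY G X' Y := by
  classical
  rw [eXY, Finset.union_product, Finset.filter_union, Finset.card_union_of_disjoint]
  · rfl
  · exact Finset.disjoint_filter_filter (Finset.disjoint_product.2 (Or.inl h))

theorem eXY_union_right [DecidableEq V] (X : Finset V) {Y Y' : Finset V} (h : Disjoint Y Y') :
    eXY G X (Y ∪ Y') = eXY G X Y + eXY G X Y' := by
  classical
  rw [eXY, Finset.product_union, Finset.filter_union, Finset.card_union_of_disjoint]
  · rfl
  · exact Finset.disjoint_filter_filter (Finset.disjoint_product.2 (Or.inr h))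

theorem eXY_doubleCover_product_singleton_self (X Y : Finset V) (b : Bool) :
    eXY (doubleCover G) (X ×ˢ {b}) (Y ×ˢ {b}) = 0 := by
  classical
  rw [eXY, Finset.card_eq_zero, Finset.filter_eq_empty_iff]
  rintro ⟨⟨x, b₁⟩, ⟨y, b₂⟩⟩ hp ⟨-, hne⟩
  simp only [Finset.mem_product, Finset.mem_singleton] at hp
  exact hne (hp.1.2.trans hp.2.2.symm)

theorem eXY_doubleCover_product_singleton {b c : Bool} (hbc : b ≠ c) (X Y : Finset V) :
    eXY (doubleCover G) (X ×ˢ {b}) (Y ×ˢ {c}) = eXY G X Y := by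
  classical
  refine Finset.card_nbij' (fun p => (p.1.1, p.2.1)) (fun q => ((q.1, b), (q.2, c)))
    ?_ ?_ ?_ ?_
  · rintro ⟨⟨x, b'⟩, y, c'⟩; simp +contextual [doubleCover]
  · rintro ⟨x, y⟩; simp [doubleCover, hbc]
  · rintro ⟨⟨x, b'⟩, y, c'⟩; simp +contextual [doubleCover]
  · rintro ⟨x, y⟩; simp

theorem eXY_doubleCover_product_false_union_product_true [DecidableEq V]
    (X₀ X₁ Y₀ Y₁ : Finset V) :
    eXY (doubleCover G) (X₀ ×ˢ {false} ∪ X₁ ×ˢ {true}) (Y₀ ×ˢ {false} ∪ Y₁ ×ˢ {true}) =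
      eXY G X₀ Y₁ + eXY G X₁ Y₀ := by
  have hdisj (A B : Finset V) : Disjoint (A ×ˢ {false}) (B ×ˢ {true}) :=
    Finset.disjoint_product.2 (Or.inr (by simp))
  rw [eXY_union_left _ (hdisj _ _), eXY_union_right _ _ (hdisj _ _),
    eXY_union_right _ _ (hdisj _ _), eXY_doubleCover_product_singleton_self,
    eXY_doubleCover_product_singleton_self, eXY_doubleCover_product_singleton _ (by decide),
    eXY_doubleCover_product_singleton _ (by decide)]
  ring

def ratioSet : Set ℝ :=
  {r : ℝ | ∃ X Y : Finset V, X.Nonempty ∧ Y.Nonempty ∧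
    r = (eXY G X Y : ℝ) / √((X.card : ℝ) * (Y.card : ℝ))}

theorem MG_eq_sSup_ratioSet : MG G = sSup (ratioSet G) := rfl

theorem ratioSet_nonneg {r : ℝ} (hr : r ∈ ratioSet G) : 0 ≤ r := by
  obtain ⟨X, Y, -, -, rfl⟩ := hr
  positivity

theorem MG_nonneg : 0 ≤ MG G :=
  Real.sSup_nonneg fun _ => ratioSet_nonneg G

theorem mem_upperBounds_ratioSet_iff {m : ℝ} (hm : 0 ≤ m) :
    m ∈ upperBounds (ratioSet G) ↔
      ∀ X Y : Finset V, (eXY G X Y : ℝ) ≤ m * √((X.card : ℝ) * (Y.card : ℝ)) := by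
  constructor
  · intro h X Y
    rcases X.eq_empty_or_nonempty with rfl | hX
    · simp
    rcases Y.eq_empty_or_nonempty with rfl | hY
    · simp
    have hpos : 0 < √((X.card : ℝ) * (Y.card : ℝ)) := by
      have := hX.card_pos; have := hY.card_pos; positivity
    exact (div_le_iff₀ hpos).1 (h ⟨X, Y, hX, hY, rfl⟩)
  · rintro h _ ⟨X, Y, -, -, rfl⟩
    exact div_le_of_le_mul₀ (Real.sqrt_nonneg _) hm (h X Y)

theorem ratioSet_subset_ratioSet_doubleCover : ratioSet G ⊆ ratioSet (doubleCover G) := by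
  classical
  rintro _ ⟨X, Y, hX, hY, rfl⟩
  refine ⟨X ×ˢ {false} ∪ ∅ ×ˢ {true}, ∅ ×ˢ {false} ∪ Y ×ˢ {true}, by simpa using hX,
    by simpa using hY, ?_⟩
  rw [eXY_doubleCover_product_false_union_product_true,
    Finset.card_product_false_union_product_true, Finset.card_product_false_union_product_true]
  simp

theorem eXY_doubleCover_le_mul_sqrt {m : ℝ} (hm : 0 ≤ m)
    (hG : ∀ X Y : Finset V, (eXY G X Y : ℝ) ≤ m * √((X.card : ℝ) * (Y.card : ℝ)))
    (X Y : Finset (V × Bool)) :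
    (eXY (doubleCover G) X Y : ℝ) ≤ m * √((X.card : ℝ) * (Y.card : ℝ)) := by
  classical
  obtain ⟨X₀, X₁, rfl⟩ := X.exists_eq_product_false_union_product_true
  obtain ⟨Y₀, Y₁, rfl⟩ := Y.exists_eq_product_false_union_product_true
  rw [eXY_doubleCover_product_false_union_product_true,
    Finset.card_product_false_union_product_true, Finset.card_product_false_union_product_true]
  push_cast
  calc (eXY G X₀ Y₁ : ℝ) + eXY G X₁ Y₀
      ≤ m * (√((X₀.card : ℝ) * Y₁.card) + √((X₁.card : ℝ) * Y₀.card)) := by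
        rw [mul_add]; exact add_le_add (hG _ _) (hG _ _)
    _ ≤ m * √(((X₀.card : ℝ) + X₁.card) * (Y₀.card + Y₁.card)) := by
        gcongr
        exact Real.sqrt_mul_add_sqrt_mul_le (by positivity) (by positivity) (by positivity)
          (by positivity)

end eXY

theorem statement4_general {V : Type*} (G : SimpleGraph V) :
    MG (doubleCover G) = MG G := by
  have hsub := ratioSet_subset_ratioSet_doubleCover G
  by_cases hG : BddAbove (ratioSet G)
  · have hM := MG_nonneg G
    have hbound := (mem_upperBounds_ratioSet_iff G hM).1 fun _ => le_csSup hG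
    have hMG : MG G ∈ upperBounds (ratioSet (doubleCover G)) :=
      (mem_upperBounds_ratioSet_iff _ hM).2 (eXY_doubleCover_le_mul_sqrt G hM hbound)
    exact le_antisymm (Real.sSup_le hMG hM)
      (Real.sSup_le (fun _ hr => le_csSup ⟨_, hMG⟩ (hsub hr)) (MG_nonneg _))
  · have hdc : ¬BddAbove (ratioSet (doubleCover G)) := fun h => hG (h.mono hsub)
    rw [MG_eq_sSup_ratioSet, MG_eq_sSup_ratioSet, csSup_of_not_bddAbove hG,
      csSup_of_not_bddAbove hdc]

/-- `M(G × K₂) = M(G)`. -/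
theorem statement4 {V : Type*} [Fintype V] [Nonempty V] (G : SimpleGraph V) :
    MG (doubleCover G) = MG G :=
  statement4_general G
end

section
/- Let G be a finite simple bipartite graph with nonempty partite sets U and W, let d(v) denote the degree of a vertex v, and let Δ_U := max_{u∈U} d(u) and Δ_W := max_{w∈W} d(w). Then max{ √((Σ_{u∈U} d(u)²)/|W|), √((Σ_{w∈W} d(w)²)/|U|) } ≤ λmax(G) ≤ √(Δ_U·Δ_W); consequently, ((Σ_{u∈U} d(u)²)/|U|)^{1/4} · ((Σ_{w∈W} d(w)²)/|W|)^{1/4} ≤ λmax(G). -/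
/-!
Lower bounds: for `A` the adjacency matrix, `S = ∑_{u ∈ U} d(u)²` and the vector `x` equal to
`t d(u)` on `U` and to `1` on `W`, bipartiteness gives `xᵀAx = 2tS` and `xᵀx = t²S + |W|`, so
`2tS ≤ λmax (t²S + |W|)` for every `t`; `t = 0` gives `λmax ≥ 0` and `t = 1/λmax` gives
`S ≤ λmax² |W|`.

Upper bound: an eigenvalue `μ` of `A` yields the eigenvalue `μ²` of the nonnegative matrix `A²`,
whose row sum at `i` is `∑_{k ~ i} d(k) ≤ Δ_U Δ_W`, so Gershgorin's theorem gives `μ² ≤ Δ_U Δ_W`.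

The last inequality is the geometric mean of the two lower bounds.
-/

section

open Finset Matrix

namespace Matrix

variable {n : Type*} [Fintype n] [DecidableEq n]

theorem le_of_mem_spectrum_of_sum_abs_le {A : Matrix n n ℝ} {c μ : ℝ}
    (hrow : ∀ i, ∑ j, |A i j| ≤ c) (hμ : μ ∈ spectrum ℝ A) : μ ≤ c := by
  rw [← spectrum_toLin', ← Module.End.hasEigenvalue_iff_mem_spectrum] at hμ
  obtain ⟨k, hk⟩ := eigenvalue_mem_ball hμ
  simp only [Metric.mem_closedBall, Real.dist_eq, Real.norm_eq_abs] at hk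
  calc μ ≤ |A k k| + ∑ j ∈ univ.erase k, |A k j| := by
        linarith [le_abs_self (μ - A k k), le_abs_self (A k k), hk]
    _ = ∑ j, |A k j| := add_sum_erase _ (fun j => |A k j|) (mem_univ k)
    _ ≤ c := hrow k

open scoped MatrixOrder in
theorem IsHermitian.dotProduct_mulVec_le_sSup_spectrum {A : Matrix n n ℝ} (hA : A.IsHermitian)
    (x : n → ℝ) : x ⬝ᵥ A *ᵥ x ≤ sSup (spectrum ℝ A) * (x ⬝ᵥ x) := by
  have hle : A ≤ algebraMap ℝ _ (sSup (spectrum ℝ A)) :=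
    le_algebraMap_of_spectrum_le fun μ hμ => le_csSup A.finite_real_spectrum.bddAbove hμ
  have := (Matrix.le_iff.mp hle).dotProduct_mulVec_nonneg x
  simpa [sub_mulVec, dotProduct_sub, Algebra.algebraMap_eq_smul_one, smul_mulVec] using this

end Matrix

theorem sqrt_div_le_of_forall_two_mul_le {S N L : ℝ} (hN : 0 < N)
    (h : ∀ t, 2 * t * S ≤ L * (t ^ 2 * S + N)) : √(S / N) ≤ L := by
  have hL : 0 ≤ L := nonneg_of_mul_nonneg_left (by simpa using h 0) hN
  rcases hL.eq_or_lt with rfl | hL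
  · have hS : S ≤ 0 := by linarith [h 1]
    rw [Real.sqrt_eq_zero'.mpr (div_nonpos_of_nonpos_of_nonneg hS hN.le)]
  · have h' := h L⁻¹
    refine Real.sqrt_le_iff.mpr ⟨hL.le, (div_le_iff₀ hN).mpr ?_⟩
    field_simp at h'
    nlinarith

theorem rpow_quarter_le_of_sqrt_le {x y L : ℝ} (hx : 0 ≤ x) (hy : 0 ≤ y)
    (hxL : √x ≤ L) (hyL : √y ≤ L) : (x * y) ^ (1 / 4 : ℝ) ≤ L := by
  have hL : 0 ≤ L := (Real.sqrt_nonneg x).trans hxL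
  have hxy : x * y ≤ L ^ 4 := by
    have := mul_le_mul (Real.sqrt_le_iff.mp hxL).2 (Real.sqrt_le_iff.mp hyL).2 hy (sq_nonneg L)
    linarith
  calc (x * y) ^ (1 / 4 : ℝ) ≤ (L ^ 4) ^ ((4 : ℕ)⁻¹ : ℝ) := by
        rw [one_div]; exact Real.rpow_le_rpow (mul_nonneg hx hy) hxy (by norm_num)
    _ = L := Real.pow_rpow_inv_natCast hL (by norm_num)

-- `lamMax` is stated with classical decidability instances.
theorem lamMax_eq_sSup_spectrum {V : Type*} [Fintype V] [DecidableEq V] (G : SimpleGraph V)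
    [DecidableRel G.Adj] : lamMax G = sSup (spectrum ℝ (G.adjMatrix ℝ)) := by
  unfold lamMax
  congr!

namespace SimpleGraph

variable {V : Type*} [Fintype V] {G : SimpleGraph V} {U W : Finset V}

theorem sum_adjMatrix_sq_apply [DecidableEq V] [DecidableRel G.Adj] (i : V) :
    ∑ j, (G.adjMatrix ℝ ^ 2) i j = ∑ k ∈ G.neighborFinset i, (G.degree k : ℝ) := by
  simp_rw [sq, adjMatrix_mul_apply]
  rw [sum_comm]
  simp only [adjMatrix_apply, degree_eq_sum_if_adj]

theorem sum_degree_neighborFinset_le [DecidableRel G.Adj] {i : V} {D : ℝ}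
    (hD : ∀ k ∈ G.neighborFinset i, (G.degree k : ℝ) ≤ D) :
    ∑ k ∈ G.neighborFinset i, (G.degree k : ℝ) ≤ G.degree i * D := by
  simpa [card_neighborFinset_eq_degree] using sum_le_card_nsmul _ _ _ hD

namespace IsBipartiteWith

theorem sum_univ_eq_add {M : Type*} [AddCommMonoid M] (h : G.IsBipartiteWith U W)
    (hcover : ∀ v, v ∈ U ∨ v ∈ W) (f : V → M) :
    ∑ v, f v = ∑ u ∈ U, f u + ∑ w ∈ W, f w := by
  classical
  rw [← sum_union (by simpa using h.disjoint)]
  exact (sum_subset (subset_univ _) fun v _ hv => absurd (mem_union.mpr (hcover v)) hv).symm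

variable [DecidableRel G.Adj]

theorem sum_degree_neighborFinset_le_sup'_mul_sup' (h : G.IsBipartiteWith U W)
    (hU : U.Nonempty) (hW : W.Nonempty) {u : V} (hu : u ∈ U) :
    ∑ k ∈ G.neighborFinset u, (G.degree k : ℝ) ≤
      (U.sup' hU fun u => (G.degree u : ℝ)) * W.sup' hW fun w => (G.degree w : ℝ) := by
  obtain ⟨w, hw⟩ := hW
  have hnbr : ∀ k ∈ G.neighborFinset u, k ∈ W := fun k hk => by
    simpa using h.mem_of_mem_adj (by simpa using hu) ((mem_neighborFinset _ _ _).mp hk)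
  calc ∑ k ∈ G.neighborFinset u, (G.degree k : ℝ)
      ≤ G.degree u * W.sup' ⟨w, hw⟩ fun w => (G.degree w : ℝ) :=
        sum_degree_neighborFinset_le fun k hk => le_sup' (fun w => (G.degree w : ℝ)) (hnbr k hk)
    _ ≤ _ := mul_le_mul_of_nonneg_right (le_sup' (fun u => (G.degree u : ℝ)) hu)
        (le_sup'_of_le _ hw (Nat.cast_nonneg _))

theorem lamMax_le_sqrt_sup'_mul_sup' (h : G.IsBipartiteWith U W) (hcover : ∀ v, v ∈ U ∨ v ∈ W)
    (hU : U.Nonempty) (hW : W.Nonempty) :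
    lamMax G ≤ √((U.sup' hU fun u => (G.degree u : ℝ)) * W.sup' hW fun w => (G.degree w : ℝ)) := by
  classical
  rw [lamMax_eq_sSup_spectrum]
  refine Real.sSup_le (fun μ hμ => Real.le_sqrt_of_sq_le ?_) (Real.sqrt_nonneg _)
  refine Matrix.le_of_mem_spectrum_of_sum_abs_le (fun i => ?_) (spectrum.pow_mem_pow _ 2 hμ)
  have hentry : ∀ j, 0 ≤ (G.adjMatrix ℝ ^ 2) i j := fun j => by
    rw [adjMatrix_pow_apply_eq_card_walk]
    positivity
  simp_rw [abs_of_nonneg (hentry _), sum_adjMatrix_sq_apply]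
  rcases hcover i with hi | hi
  · exact h.sum_degree_neighborFinset_le_sup'_mul_sup' hU hW hi
  · rw [mul_comm]
    exact h.symm.sum_degree_neighborFinset_le_sup'_mul_sup' hW hU hi

theorem sum_mul_adjMatrix_mulVec (h : G.IsBipartiteWith U W) (x : V → ℝ) :
    ∑ u ∈ U, x u * (G.adjMatrix ℝ *ᵥ x) u =
      ∑ u ∈ U, ∑ w ∈ W, if G.Adj u w then x u * x w else 0 := by
  refine sum_congr rfl fun u hu => ?_
  rw [adjMatrix_mulVec_apply, isBipartiteWith_neighborFinset h (by simpa using hu), mul_sum,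
    sum_filter]

theorem dotProduct_adjMatrix_mulVec_self (h : G.IsBipartiteWith U W)
    (hcover : ∀ v, v ∈ U ∨ v ∈ W) (x : V → ℝ) :
    x ⬝ᵥ G.adjMatrix ℝ *ᵥ x = 2 * ∑ u ∈ U, x u * (G.adjMatrix ℝ *ᵥ x) u := by
  have hW : ∑ w ∈ W, x w * (G.adjMatrix ℝ *ᵥ x) w = ∑ u ∈ U, x u * (G.adjMatrix ℝ *ᵥ x) u := by
    rw [h.symm.sum_mul_adjMatrix_mulVec, h.sum_mul_adjMatrix_mulVec, sum_comm]
    refine sum_congr rfl fun u _ => sum_congr rfl fun w _ => ?_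
    simp only [G.adj_comm w u, mul_comm (x w)]
  rw [dotProduct, h.sum_univ_eq_add hcover, hW, two_mul]

theorem sqrt_sum_sq_degree_div_card_le_lamMax (h : G.IsBipartiteWith U W)
    (hcover : ∀ v, v ∈ U ∨ v ∈ W) (hW : W.Nonempty) :
    √((∑ u ∈ U, (G.degree u : ℝ) ^ 2) / W.card) ≤ lamMax G := by
  classical
  refine sqrt_div_le_of_forall_two_mul_le (by exact_mod_cast hW.card_pos) fun t => ?_
  set x : V → ℝ := fun v => if v ∈ U then t * G.degree v else 1
  have hxU : ∀ u ∈ U, x u = t * G.degree u := fun u hu => if_pos hu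
  have hxW : ∀ w ∈ W, x w = 1 := fun w hw =>
    if_neg fun hwU => Finset.disjoint_left.mp (by simpa using h.disjoint) hwU hw
  have hAx : ∀ u ∈ U, (G.adjMatrix ℝ *ᵥ x) u = G.degree u := fun u hu => by
    rw [adjMatrix_mulVec_apply, sum_congr rfl fun w hw => hxW w
      (h.mem_of_mem_adj (by simpa using hu) ((mem_neighborFinset _ _ _).mp hw)), sum_const,
      card_neighborFinset_eq_degree, nsmul_one]
  have hquad : x ⬝ᵥ G.adjMatrix ℝ *ᵥ x = 2 * t * ∑ u ∈ U, (G.degree u : ℝ) ^ 2 := by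
    rw [h.dotProduct_adjMatrix_mulVec_self hcover, mul_assoc]
    congr 1
    rw [mul_sum]
    refine sum_congr rfl fun u hu => ?_
    rw [hAx u hu, hxU u hu]
    ring
  have hnorm : x ⬝ᵥ x = t ^ 2 * ∑ u ∈ U, (G.degree u : ℝ) ^ 2 + W.card := by
    rw [dotProduct, h.sum_univ_eq_add hcover, mul_sum]
    congr 1
    · refine sum_congr rfl fun u hu => ?_
      rw [hxU u hu]
      ring
    · rw [sum_congr rfl fun w hw => by rw [hxW w hw, mul_one], sum_const, nsmul_one]
  rw [lamMax_eq_sSup_spectrum, ← hquad, ← hnorm]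
  exact (isHermitian_adjMatrix ..).dotProduct_mulVec_le_sSup_spectrum x

end IsBipartiteWith

end SimpleGraph

end

/-- For a bipartite graph with partite sets `U`, `W`:
`max{√(Σ_{u∈U} d(u)²/|W|), √(Σ_{w∈W} d(w)²/|U|)} ≤ λmax(G) ≤ √(Δ_U·Δ_W)`, and consequently
`(Σ_{u∈U} d(u)²/|U|)^{1/4} · (Σ_{w∈W} d(w)²/|W|)^{1/4} ≤ λmax(G)`. -/
theorem statement5 {V : Type*} [Fintype V] (G : SimpleGraph V) [DecidableRel G.Adj]
    (U W : Finset V) (hU : U.Nonempty) (hW : W.Nonempty)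
    (hdisj : Disjoint U W) (hcover : ∀ v : V, v ∈ U ∨ v ∈ W)
    (hbip : ∀ a b, G.Adj a b → (a ∈ U ∧ b ∈ W) ∨ (a ∈ W ∧ b ∈ U)) :
    max (Real.sqrt ((∑ u ∈ U, (G.degree u : ℝ) ^ 2) / (W.card : ℝ)))
        (Real.sqrt ((∑ w ∈ W, (G.degree w : ℝ) ^ 2) / (U.card : ℝ))) ≤ lamMax G ∧
    lamMax G ≤ Real.sqrt ((U.sup' hU fun u => (G.degree u : ℝ)) *
        (W.sup' hW fun w => (G.degree w : ℝ))) ∧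
    ((∑ u ∈ U, (G.degree u : ℝ) ^ 2) / (U.card : ℝ)) ^ ((1 : ℝ) / 4) *
      ((∑ w ∈ W, (G.degree w : ℝ) ^ 2) / (W.card : ℝ)) ^ ((1 : ℝ) / 4) ≤ lamMax G := by
  have h : G.IsBipartiteWith U W :=
    ⟨by simpa using hdisj, fun a b hab => by simpa using hbip a b hab⟩
  have hlowU := h.sqrt_sum_sq_degree_div_card_le_lamMax hcover hW
  have hlowW := h.symm.sqrt_sum_sq_degree_div_card_le_lamMax (fun v => (hcover v).symm) hU
  refine ⟨max_le hlowU hlowW, h.lamMax_le_sqrt_sup'_mul_sup' hcover hU hW, ?_⟩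
  rw [← Real.mul_rpow (by positivity) (by positivity), div_mul_div_comm,
    mul_comm (U.card : ℝ), ← div_mul_div_comm]
  exact rpow_quarter_le_of_sqrt_le (by positivity) (by positivity) hlowU hlowW
end

section
/- Let G be a finite simple bipartite graph with nonempty partite sets U and W, having at least one edge, and let n := min{|U|, |W|}. Then M(G) ≤ λmax(G) ≤ ((1/2)·log n + 2)·M(G). -/
/-!
The lower bound holds for every graph: `e(X,Y) = 𝟙_Xᵀ A 𝟙_Y ≤ ‖A‖ √(|X||Y|)`, and for a symmetric
matrix with nonnegative entries the spectral norm is the top eigenvalue, because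
`|vᵀ A v| ≤ |v|ᵀ A |v|`.

For the upper bound let `α = M(G)`, so that `e(X,Y) ≤ α √(|X||Y|)` for all `X, Y`, and let `x ≥ 0`
be a unit vector with `λmax ≤ xᵀ A x` (the absolute value of a top eigenvector). Bipartiteness gives
`xᵀ A x = 2 ∑_{u ∈ P, w ∈ Q} A_{uw} x_u x_w` with `{P, Q} = {U, W}` and `|P| = n`. If `|T| = j`,
at most `α² j / (r + 1)` edges go from `T` to the vertices with more than `r` neighbours in `T`;
summing over `r` gives `∑_w d_T(w)² ≤ α² j H_j`, so by Cauchy–Schwarz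
`∑_{u ∈ T, w ∈ Q} A_{uw} x_w ≤ α F(j) ‖x_Q‖` with `F(j) = √(j H_j)`. Listing `P` as `u_0, u_1, …`
in decreasing order of `x`, Abel summation turns these bounds on prefixes into
`∑_{u ∈ P, w ∈ Q} A_{uw} x_u x_w ≤ α ‖x_Q‖ ∑_k x_{u_k} (F(k+1) - F(k))`, and Cauchy–Schwarz with
`∑_{k < n} (F(k+1) - F(k))² ≤ ((H_n + 3)/2)²` bounds this by
`α ((H_n + 3)/2) ‖x_P‖ ‖x_Q‖ ≤ α (H_n + 3)/4`. Finally `H_n ≤ 1 + log n`.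
-/

open Finset Matrix

lemma harmonic_monotone : Monotone harmonic :=
  monotone_nat_of_le_succ fun n => by
    rw [harmonic_succ]; exact le_add_of_nonneg_right (by positivity)

lemma harmonic_nonneg (n : ℕ) : 0 ≤ harmonic n := by
  simpa using harmonic_monotone (Nat.zero_le n)

noncomputable def sqrtMulHarmonic (j : ℕ) : ℝ := √(j * harmonic j)

lemma sqrtMulHarmonic_zero : sqrtMulHarmonic 0 = 0 := by simp [sqrtMulHarmonic]

lemma sqrtMulHarmonic_one : sqrtMulHarmonic 1 = 1 := by simp [sqrtMulHarmonic]

lemma sqrtMulHarmonic_nonneg (j : ℕ) : 0 ≤ sqrtMulHarmonic j := Real.sqrt_nonneg _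

lemma sq_sqrtMulHarmonic (j : ℕ) : sqrtMulHarmonic j ^ 2 = j * harmonic j :=
  Real.sq_sqrt (mul_nonneg j.cast_nonneg (mod_cast harmonic_nonneg j))

lemma sq_sqrtMulHarmonic_succ (j : ℕ) :
    sqrtMulHarmonic (j + 1) ^ 2 = sqrtMulHarmonic j ^ 2 + (harmonic j + 1) := by
  rw [sq_sqrtMulHarmonic, sq_sqrtMulHarmonic, harmonic_succ]
  push_cast
  field_simp
  ring

lemma sqrtMulHarmonic_le_succ (j : ℕ) : sqrtMulHarmonic j ≤ sqrtMulHarmonic (j + 1) := by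
  have : (0 : ℝ) ≤ harmonic j := mod_cast harmonic_nonneg j
  refine (pow_le_pow_iff_left₀ (sqrtMulHarmonic_nonneg j) (sqrtMulHarmonic_nonneg (j + 1))
    two_ne_zero).mp ?_
  linarith [sq_sqrtMulHarmonic_succ j]

lemma sq_sqrtMulHarmonic_succ_sub_mul_le {i : ℕ} (hi : 1 ≤ i) :
    (sqrtMulHarmonic (i + 1) - sqrtMulHarmonic i) ^ 2 * (4 * i) ≤ harmonic i + 3 := by
  have hH : (1 : ℝ) ≤ harmonic i := by simpa using (Rat.cast_le (K := ℝ)).2 (harmonic_monotone hi)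
  set a := sqrtMulHarmonic i
  set b := sqrtMulHarmonic (i + 1)
  have hab : a ≤ b := sqrtMulHarmonic_le_succ i
  have key : (b - a) ^ 2 * (4 * a ^ 2) ≤ (harmonic i + 1) ^ 2 := by
    have hprod : (b - a) * (b + a) = harmonic i + 1 := by
      linear_combination sq_sqrtMulHarmonic_succ i
    have h2a : (2 * a) ^ 2 ≤ (b + a) ^ 2 :=
      pow_le_pow_left₀ (by linarith [sqrtMulHarmonic_nonneg i]) (by linarith) 2
    rw [← hprod]
    nlinarith [sq_nonneg (b - a)]
  rw [sq_sqrtMulHarmonic] at key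
  -- `(H + 1)² ≤ (H + 3) H` as `H ≥ 1`
  have : (b - a) ^ 2 * (4 * i) * harmonic i ≤ (harmonic i + 3) * harmonic i := by nlinarith
  exact le_of_mul_le_mul_right this (by linarith)

lemma sum_sq_sqrtMulHarmonic_sub_le (m : ℕ) :
    ∑ i ∈ range m, (sqrtMulHarmonic (i + 1) - sqrtMulHarmonic i) ^ 2 ≤
      ((harmonic m + 3) / 2) ^ 2 := by
  induction m with
  | zero => simp; positivity
  | succ m ih =>
    rw [sum_range_succ, harmonic_succ]
    push_cast
    rcases Nat.eq_zero_or_pos m with rfl | hm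
    · norm_num [sqrtMulHarmonic_one, sqrtMulHarmonic_zero]
    have hH : (0 : ℝ) ≤ harmonic m := mod_cast harmonic_nonneg m
    have hm' : (1 : ℝ) ≤ m := mod_cast hm
    have hd : (sqrtMulHarmonic (m + 1) - sqrtMulHarmonic m) ^ 2 ≤
        (harmonic m + 3) / 2 * ((m : ℝ) + 1)⁻¹ := by
      rw [← div_eq_mul_inv, div_div, le_div_iff₀ (by positivity)]
      have h4m : 2 * ((m : ℝ) + 1) ≤ 4 * m := by linarith
      exact (mul_le_mul_of_nonneg_left h4m (sq_nonneg _)).trans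
        (sq_sqrtMulHarmonic_succ_sub_mul_le hm)
    -- `((H + δ + 3) / 2)² ≥ ((H + 3) / 2)² + (H + 3) / 2 * δ` with `δ = 1 / (m + 1)`
    nlinarith [sq_nonneg ((m : ℝ) + 1)⁻¹]

lemma sum_mul_le_sum_mul_of_sum_range_le {a c d : ℕ → ℝ} {m : ℕ} (ha : AntitoneOn a (Set.Iio m))
    (ha0 : ∀ k < m, 0 ≤ a k) (hcd : ∀ j ≤ m, ∑ k ∈ range j, c k ≤ ∑ k ∈ range j, d k) :
    ∑ k ∈ range m, a k * c k ≤ ∑ k ∈ range m, a k * d k := by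
  rcases m with _ | m
  · simp
  have hprefix : ∀ j ≤ m + 1, 0 ≤ ∑ k ∈ range j, (d k - c k) := fun j hj => by
    rw [sum_sub_distrib]; linarith [hcd j hj]
  have hparts := sum_range_by_parts a (fun k => d k - c k) (m + 1)
  simp only [smul_eq_mul, Nat.add_sub_cancel] at hparts
  rw [← sub_nonneg, ← sum_sub_distrib]
  simp_rw [← mul_sub]
  rw [hparts, sub_nonneg]
  refine (sum_nonpos fun i hi => ?_).trans (mul_nonneg (ha0 m m.lt_succ_self) (hprefix _ le_rfl))
  have hi : i + 1 < m + 1 := by simpa using hi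
  exact mul_nonpos_of_nonpos_of_nonneg
    (sub_nonpos.2 (ha (by simp; omega) (by simpa using hi) (Nat.le_succ i))) (hprefix _ hi.le)

lemma exists_enumeration_antitoneOn {V α : Type*} [DecidableEq V] [Nonempty V] [LinearOrder α]
    (g : V → α) (P : Finset V) :
    ∃ w : ℕ → V, Set.InjOn w (Set.Iio #P) ∧ (range #P).image w = P ∧
      AntitoneOn (g ∘ w) (Set.Iio #P) := by
  induction P using Finset.induction_on_min_value g with
  | empty => exact ⟨fun _ => Classical.arbitrary V, by simp, by simp, fun _ h => by simp at h⟩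
  | insert a s has hmin ih =>
    obtain ⟨w, hinj, himg, hanti⟩ := ih
    have hws : ∀ k < #s, w k ∈ s := fun k hk => himg ▸ mem_image_of_mem w (mem_range.2 hk)
    rw [card_insert_of_notMem has]
    refine ⟨fun k => if k < #s then w k else a, ?_, ?_, ?_⟩
    · intro i hi j hj hij
      simp only [Set.mem_Iio] at hi hj
      by_cases hi' : i < #s <;> by_cases hj' : j < #s <;>
        simp only [hi', hj', if_true, if_false] at hij
      · exact hinj hi' hj' hij
      · exact absurd (hij ▸ hws i hi') has
      · exact absurd (hij ▸ hws j hj') has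
      · omega
    · rw [range_add_one, image_insert, if_neg (lt_irrefl _)]
      conv_rhs => rw [← himg]
      refine congrArg _ (image_congr fun k hk => ?_)
      exact if_pos (mem_range.1 hk)
    · intro i hi j hj hij
      simp only [Set.mem_Iio, Function.comp_apply] at hi hj ⊢
      by_cases hj' : j < #s
      · rw [if_pos hj', if_pos (hij.trans_lt hj')]
        exact hanti (hij.trans_lt hj') hj' hij
      · rw [if_neg hj']
        split_ifs with hi'
        exacts [hmin _ (hws i hi'), le_rfl]

namespace Matrix

variable {n : Type*} [Fintype n]

lemma abs_dotProduct_mulVec_le {A : Matrix n n ℝ} (hA : ∀ i j, 0 ≤ A i j) (p q : n → ℝ) :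
    |p ⬝ᵥ A *ᵥ q| ≤ |p| ⬝ᵥ A *ᵥ |q| := by
  simp only [dotProduct, mulVec, mul_sum, Pi.abs_apply]
  refine (abs_sum_le_sum_abs _ _).trans (sum_le_sum fun i _ => ?_)
  refine (abs_sum_le_sum_abs _ _).trans (sum_le_sum fun j _ => ?_)
  rw [abs_mul, abs_mul, abs_of_nonneg (hA i j)]

lemma abs_dotProduct_abs_self (v : n → ℝ) : |v| ⬝ᵥ |v| = v ⬝ᵥ v := by
  simp only [dotProduct, Pi.abs_apply, abs_mul_abs_self]

namespace IsHermitian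

variable [DecidableEq n] {A : Matrix n n ℝ} (hA : A.IsHermitian)
include hA

lemma dotProduct_eigenvectorBasis_eq_inner (i : n) (p : n → ℝ) :
    ⇑(hA.eigenvectorBasis i) ⬝ᵥ p = inner ℝ (hA.eigenvectorBasis i) (WithLp.toLp 2 p) := by
  simp [EuclideanSpace.inner_eq_star_dotProduct, dotProduct_comm]

lemma dotProduct_mulVec_eq_sum_eigenvalues (p q : n → ℝ) :
    p ⬝ᵥ A *ᵥ q = ∑ i, hA.eigenvalues i *
      ((⇑(hA.eigenvectorBasis i) ⬝ᵥ p) * (⇑(hA.eigenvectorBasis i) ⬝ᵥ q)) := by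
  have hq := congrArg WithLp.ofLp (hA.eigenvectorBasis.sum_repr' (WithLp.toLp 2 q))
  simp only [WithLp.ofLp_sum, WithLp.ofLp_smul] at hq
  conv_lhs => rw [← hq]
  simp only [mulVec_sum, mulVec_smul, mulVec_eigenvectorBasis, dotProduct_sum, dotProduct_smul,
    smul_eq_mul, ← dotProduct_eigenvectorBasis_eq_inner]
  refine sum_congr rfl fun i _ => ?_
  rw [dotProduct_comm p]; ring

lemma sum_sq_dotProduct_eigenvectorBasis (p : n → ℝ) :
    ∑ i, (⇑(hA.eigenvectorBasis i) ⬝ᵥ p) ^ 2 = p ⬝ᵥ p := by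
  have := hA.eigenvectorBasis.sum_inner_mul_inner (WithLp.toLp 2 p) (WithLp.toLp 2 p)
  simp only [real_inner_comm (WithLp.toLp 2 p)] at this
  simpa only [sq, EuclideanSpace.inner_eq_star_dotProduct, star_trivial] using this

lemma dotProduct_self_eigenvectorBasis (i : n) :
    ⇑(hA.eigenvectorBasis i) ⬝ᵥ ⇑(hA.eigenvectorBasis i) = 1 := by
  have : inner ℝ (hA.eigenvectorBasis i) (hA.eigenvectorBasis i) = 1 := by
    rw [real_inner_self_eq_norm_sq, hA.eigenvectorBasis.orthonormal.1 i, one_pow]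
  simpa only [EuclideanSpace.inner_eq_star_dotProduct, star_trivial] using this

lemma eigenvectorBasis_dotProduct_mulVec (i : n) :
    ⇑(hA.eigenvectorBasis i) ⬝ᵥ A *ᵥ ⇑(hA.eigenvectorBasis i) = hA.eigenvalues i := by
  rw [mulVec_eigenvectorBasis, dotProduct_smul, dotProduct_self_eigenvectorBasis, smul_eq_mul,
    mul_one]

lemma dotProduct_mulVec_self_le {c : ℝ} (hc : ∀ i, hA.eigenvalues i ≤ c) (z : n → ℝ) :
    z ⬝ᵥ A *ᵥ z ≤ c * (z ⬝ᵥ z) := by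
  rw [dotProduct_mulVec_eq_sum_eigenvalues hA, ← sum_sq_dotProduct_eigenvectorBasis hA, mul_sum]
  exact sum_le_sum fun i _ => by rw [← sq]; exact mul_le_mul_of_nonneg_right (hc i) (sq_nonneg _)

lemma dotProduct_mulVec_le [Nonempty n] {c : ℝ} (hc : ∀ i, |hA.eigenvalues i| ≤ c)
    (p q : n → ℝ) : p ⬝ᵥ A *ᵥ q ≤ c * √(p ⬝ᵥ p) * √(q ⬝ᵥ q) := by
  have hc0 : 0 ≤ c := (abs_nonneg _).trans (hc (Classical.arbitrary n))
  rw [dotProduct_mulVec_eq_sum_eigenvalues hA, ← sum_sq_dotProduct_eigenvectorBasis hA p,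
    ← sum_sq_dotProduct_eigenvectorBasis hA q]
  calc _ ≤ ∑ i, c * (|⇑(hA.eigenvectorBasis i) ⬝ᵥ p| * |⇑(hA.eigenvectorBasis i) ⬝ᵥ q|) :=
        sum_le_sum fun i _ => (le_abs_self _).trans <| by
          rw [abs_mul, abs_mul]
          exact mul_le_mul_of_nonneg_right (hc i) (by positivity)
    _ ≤ _ := by
        rw [← mul_sum, mul_assoc]
        gcongr
        simpa only [sq_abs] using Real.sum_mul_le_sqrt_mul_sqrt _
          (fun i => |⇑(hA.eigenvectorBasis i) ⬝ᵥ p|) (fun i => |⇑(hA.eigenvectorBasis i) ⬝ᵥ q|)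

lemma eigenvalues_le_sSup_spectrum (i : n) : hA.eigenvalues i ≤ sSup (spectrum ℝ A) :=
  le_csSup A.finite_real_spectrum.bddAbove (hA.eigenvalues_mem_spectrum_real i)

lemma exists_eigenvalues_eq_sSup_spectrum [Nonempty n] :
    ∃ i, hA.eigenvalues i = sSup (spectrum ℝ A) := by
  rw [hA.spectrum_real_eq_range_eigenvalues]
  exact (Set.range_nonempty _).csSup_mem (Set.finite_range _)

variable (hA0 : ∀ i j, 0 ≤ A i j)
include hA0

lemma abs_eigenvalues_le_sSup_spectrum (i : n) : |hA.eigenvalues i| ≤ sSup (spectrum ℝ A) := by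
  set v := ⇑(hA.eigenvectorBasis i)
  calc |hA.eigenvalues i| = |v ⬝ᵥ A *ᵥ v| := by rw [eigenvectorBasis_dotProduct_mulVec hA]
    _ ≤ |v| ⬝ᵥ A *ᵥ |v| := abs_dotProduct_mulVec_le hA0 v v
    _ ≤ sSup (spectrum ℝ A) * (|v| ⬝ᵥ |v|) :=
        dotProduct_mulVec_self_le hA (eigenvalues_le_sSup_spectrum hA) _
    _ = sSup (spectrum ℝ A) := by
        rw [abs_dotProduct_abs_self, dotProduct_self_eigenvectorBasis hA, mul_one]

lemma exists_nonneg_sSup_spectrum_le [Nonempty n] :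
    ∃ x : n → ℝ, 0 ≤ x ∧ x ⬝ᵥ x = 1 ∧ sSup (spectrum ℝ A) ≤ x ⬝ᵥ A *ᵥ x := by
  obtain ⟨i, hi⟩ := exists_eigenvalues_eq_sSup_spectrum hA
  set v := ⇑(hA.eigenvectorBasis i)
  refine ⟨|v|, abs_nonneg v, ?_, ?_⟩
  · rw [abs_dotProduct_abs_self, dotProduct_self_eigenvectorBasis hA]
  · calc sSup (spectrum ℝ A) = v ⬝ᵥ A *ᵥ v := by rw [eigenvectorBasis_dotProduct_mulVec hA, hi]
      _ ≤ |v ⬝ᵥ A *ᵥ v| := le_abs_self _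
      _ ≤ |v| ⬝ᵥ A *ᵥ |v| := abs_dotProduct_mulVec_le hA0 v v

lemma dotProduct_mulVec_le_sSup_spectrum_s10 [Nonempty n] (p q : n → ℝ) :
    p ⬝ᵥ A *ᵥ q ≤ sSup (spectrum ℝ A) * √(p ⬝ᵥ p) * √(q ⬝ᵥ q) :=
  dotProduct_mulVec_le hA (abs_eigenvalues_le_sSup_spectrum hA hA0) p q

end IsHermitian
end Matrix

lemma sq_eq_sum_range_ite {d n : ℕ} (h : d ≤ n) :
    (d : ℝ) ^ 2 = ∑ r ∈ range n, if r < d then (d : ℝ) else 0 := by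
  rw [← sum_filter, show {r ∈ range n | r < d} = range d by ext; simp; omega]
  simp [sq]

lemma ite_mem_dotProduct {n : Type*} [Fintype n] [DecidableEq n] (X : Finset n) (f : n → ℝ) :
    (fun i => if i ∈ X then 1 else 0) ⬝ᵥ f = ∑ i ∈ X, f i := by
  simp [dotProduct, ite_mul, sum_ite_mem]

namespace SimpleGraph

variable {V : Type*} (G : SimpleGraph V)

section Counting

variable [DecidableRel G.Adj]

lemma adjMatrix_nonneg (v w : V) : 0 ≤ G.adjMatrix ℝ v w := by
  rw [adjMatrix_apply]; split_ifs <;> norm_num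

lemma sum_adjMatrix_eq_card_filter (X : Finset V) (y : V) :
    ∑ x ∈ X, G.adjMatrix ℝ x y = #{x ∈ X | G.Adj x y} := by
  simp [adjMatrix_apply, sum_boole]

lemma eXY_eq_sum_card_filter (X Y : Finset V) :
    eXY G X Y = ∑ y ∈ Y, #{x ∈ X | G.Adj x y} := by
  rw [eXY, card_filter, sum_product_right]
  simp only [card_filter]
  congr!

lemma eXY_eq_sum_sum_adjMatrix (X Y : Finset V) :
    (eXY G X Y : ℝ) = ∑ x ∈ X, ∑ y ∈ Y, G.adjMatrix ℝ x y := by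
  rw [sum_comm (f := fun x y => G.adjMatrix ℝ x y), eXY_eq_sum_card_filter]
  push_cast
  simp only [sum_adjMatrix_eq_card_filter]

lemma eXY_eq_dotProduct_mulVec [Fintype V] [DecidableEq V] (X Y : Finset V) :
    (eXY G X Y : ℝ) =
      (fun v => if v ∈ X then 1 else 0) ⬝ᵥ G.adjMatrix ℝ *ᵥ fun v => if v ∈ Y then 1 else 0 := by
  simp only [eXY_eq_sum_sum_adjMatrix, ite_mem_dotProduct, mulVec,
    dotProduct_comm (G.adjMatrix ℝ _)]

end Counting

section MG

variable [Fintype V]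

lemma finite_setOf_eXY_div_sqrt :
    {r : ℝ | ∃ X Y : Finset V, X.Nonempty ∧ Y.Nonempty ∧
      r = (eXY G X Y : ℝ) / √((#X : ℝ) * #Y)}.Finite :=
  (Set.finite_range fun p : Finset V × Finset V =>
      (eXY G p.1 p.2 : ℝ) / √((#p.1 : ℝ) * #p.2)).subset
    (by rintro r ⟨X, Y, -, -, rfl⟩; exact ⟨(X, Y), rfl⟩)

lemma eXY_le_MG_mul_sqrt (X Y : Finset V) : (eXY G X Y : ℝ) ≤ MG G * √((#X : ℝ) * #Y) := by
  rcases X.eq_empty_or_nonempty with rfl | hX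
  · simp [eXY]
  rcases Y.eq_empty_or_nonempty with rfl | hY
  · simp [eXY]
  rw [← div_le_iff₀ (by positivity)]
  exact le_csSup (finite_setOf_eXY_div_sqrt G).bddAbove ⟨X, Y, hX, hY, rfl⟩

lemma MG_nonneg [Nonempty V] : 0 ≤ MG G :=
  le_csSup_of_le (finite_setOf_eXY_div_sqrt G).bddAbove
    ⟨univ, univ, univ_nonempty, univ_nonempty, rfl⟩ (by positivity)

lemma MG_le_lamMax [Nonempty V] : MG G ≤ lamMax G := by
  classical
  refine csSup_le ⟨_, univ, univ, univ_nonempty, univ_nonempty, rfl⟩ ?_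
  rintro r ⟨X, Y, hX, hY, rfl⟩
  rw [div_le_iff₀ (by positivity), eXY_eq_dotProduct_mulVec]
  refine ((G.isHermitian_adjMatrix ℝ).dotProduct_mulVec_le_sSup_spectrum_s10 G.adjMatrix_nonneg
    _ _).trans_eq ?_
  simp [ite_mem_dotProduct, lamMax, Real.sqrt_mul, mul_assoc]

end MG

section DegreeBounds

variable [DecidableRel G.Adj] {α : ℝ}
  (hα : ∀ X Y : Finset V, (eXY G X Y : ℝ) ≤ α * √((#X : ℝ) * #Y))
include hα

lemma eXY_le_of_le_card_filter_adj {c : ℕ} (hc : 0 < c) (T W : Finset V)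
    (hW : ∀ w ∈ W, c ≤ #{x ∈ T | G.Adj x w}) : (eXY G T W : ℝ) ≤ α ^ 2 * #T / c := by
  have hce : (c : ℝ) * #W ≤ eXY G T W := by
    rw [eXY_eq_sum_card_filter, mul_comm, ← nsmul_eq_mul, ← sum_const]
    push_cast
    exact sum_le_sum fun w hw => mod_cast hW w hw
  have he : (eXY G T W : ℝ) ^ 2 ≤ α ^ 2 * #T * #W := by
    have := pow_le_pow_left₀ (Nat.cast_nonneg _) (hα T W) 2
    rwa [mul_pow, Real.sq_sqrt (by positivity), ← mul_assoc] at this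
  -- `c e² ≤ c α² |T| |W| ≤ α² |T| e`; cancel one factor `e`
  have key : (eXY G T W : ℝ) * (eXY G T W * c) ≤ eXY G T W * (α ^ 2 * #T) := by
    nlinarith [mul_le_mul_of_nonneg_left hce (by positivity : (0 : ℝ) ≤ α ^ 2 * #T)]
  rw [le_div_iff₀ (by positivity)]
  rcases (Nat.cast_nonneg (eXY G T W) : (0 : ℝ) ≤ _).eq_or_lt with he0 | he0
  · rw [← he0, zero_mul]; positivity
  · exact le_of_mul_le_mul_left key he0

lemma sum_sq_card_filter_adj_le (T Q : Finset V) :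
    ∑ w ∈ Q, (#{x ∈ T | G.Adj x w} : ℝ) ^ 2 ≤ α ^ 2 * #T * harmonic #T := by
  set d : V → ℕ := fun w => #{x ∈ T | G.Adj x w}
  calc ∑ w ∈ Q, (d w : ℝ) ^ 2
      = ∑ r ∈ range #T, ∑ w ∈ Q, if r < d w then (d w : ℝ) else 0 := by
        rw [sum_comm]
        exact sum_congr rfl fun w _ => sq_eq_sum_range_ite (card_filter_le _ _)
    _ = ∑ r ∈ range #T, (eXY G T {w ∈ Q | r < d w} : ℝ) := by
        refine sum_congr rfl fun r _ => ?_
        rw [← sum_filter, eXY_eq_sum_card_filter]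
        push_cast
        rfl
    _ ≤ ∑ r ∈ range #T, α ^ 2 * #T / ((r + 1 : ℕ) : ℝ) :=
        sum_le_sum fun r _ => eXY_le_of_le_card_filter_adj G hα r.succ_pos T _
          fun w hw => (mem_filter.1 hw).2
    _ = α ^ 2 * #T * harmonic #T := by
        simp only [harmonic, div_eq_mul_inv]
        push_cast
        rw [mul_sum]

variable (hα0 : 0 ≤ α)
include hα0

lemma sum_sum_adjMatrix_mul_le (T Q : Finset V) (h : V → ℝ) :
    ∑ x ∈ T, ∑ y ∈ Q, G.adjMatrix ℝ x y * h y ≤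
      α * sqrtMulHarmonic #T * √(∑ y ∈ Q, h y ^ 2) := by
  rw [sum_comm]
  simp only [← sum_mul, sum_adjMatrix_eq_card_filter]
  refine (Real.sum_mul_le_sqrt_mul_sqrt _ _ _).trans
    (mul_le_mul_of_nonneg_right ?_ (Real.sqrt_nonneg _))
  calc _ ≤ √(α ^ 2 * #T * harmonic #T) := Real.sqrt_le_sqrt (sum_sq_card_filter_adj_le G hα T Q)
    _ = α * sqrtMulHarmonic #T := by
        rw [mul_assoc, Real.sqrt_mul (sq_nonneg _), Real.sqrt_sq hα0, sqrtMulHarmonic]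

lemma sum_range_sum_adjMatrix_mul_le [DecidableEq V] {w : ℕ → V} {j : ℕ}
    (hw : Set.InjOn w (range j)) (Q : Finset V) (h : V → ℝ) :
    ∑ k ∈ range j, ∑ y ∈ Q, G.adjMatrix ℝ (w k) y * h y ≤
      α * sqrtMulHarmonic j * √(∑ y ∈ Q, h y ^ 2) := by
  rw [← sum_image (f := fun x => ∑ y ∈ Q, G.adjMatrix ℝ x y * h y) fun _ hx _ hy => hw hx hy]
  simpa only [card_image_of_injOn hw, card_range] using
    sum_sum_adjMatrix_mul_le G hα hα0 ((range j).image w) Q h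

lemma sum_sum_adjMatrix_mul_mul_le [DecidableEq V] [Nonempty V] (P Q : Finset V) {g : V → ℝ}
    (hg : ∀ v ∈ P, 0 ≤ g v) (h : V → ℝ) :
    ∑ x ∈ P, ∑ y ∈ Q, G.adjMatrix ℝ x y * g x * h y ≤
      α * ((harmonic #P + 3) / 2) * √(∑ x ∈ P, g x ^ 2) * √(∑ y ∈ Q, h y ^ 2) := by
  obtain ⟨w, hinj, himg, hanti⟩ := exists_enumeration_antitoneOn g P
  rw [← coe_range] at hinj
  have hwP : ∀ k < #P, w k ∈ P := fun k hk => himg ▸ mem_image_of_mem w (mem_range.2 hk)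
  have hsumP : ∀ f : V → ℝ, ∑ x ∈ P, f x = ∑ k ∈ range #P, f (w k) := fun f => by
    conv_lhs => rw [← himg]
    exact sum_image fun _ hx _ hy => hinj hx hy
  set c : V → ℝ := fun x => ∑ y ∈ Q, G.adjMatrix ℝ x y * h y
  set N := √(∑ y ∈ Q, h y ^ 2)
  have hpartial : ∀ j ≤ #P, ∑ k ∈ range j, c (w k) ≤
      ∑ k ∈ range j, α * N * (sqrtMulHarmonic (k + 1) - sqrtMulHarmonic k) := fun j hj => by
    rw [← mul_sum, sum_range_sub, sqrtMulHarmonic_zero, sub_zero, mul_right_comm]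
    exact sum_range_sum_adjMatrix_mul_le G hα hα0
      (hinj.mono (by simpa using range_subset_range.2 hj)) Q h
  have hH : (0 : ℝ) ≤ (harmonic #P + 3) / 2 := by have := harmonic_nonneg #P; positivity
  calc ∑ x ∈ P, ∑ y ∈ Q, G.adjMatrix ℝ x y * g x * h y
      = ∑ k ∈ range #P, g (w k) * c (w k) := by
        rw [hsumP]
        refine sum_congr rfl fun k _ => ?_
        simp only [c, mul_sum]
        exact sum_congr rfl fun y _ => by ring
    _ ≤ ∑ k ∈ range #P, g (w k) * (α * N * (sqrtMulHarmonic (k + 1) - sqrtMulHarmonic k)) :=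
        sum_mul_le_sum_mul_of_sum_range_le hanti (fun k hk => hg _ (hwP k hk)) hpartial
    _ = α * N * ∑ k ∈ range #P, g (w k) * (sqrtMulHarmonic (k + 1) - sqrtMulHarmonic k) := by
        rw [mul_sum]
        exact sum_congr rfl fun k _ => by ring
    _ ≤ α * N * (√(∑ x ∈ P, g x ^ 2) * ((harmonic #P + 3) / 2)) := by
        gcongr
        refine (Real.sum_mul_le_sqrt_mul_sqrt _ _ _).trans ?_
        rw [hsumP (g · ^ 2)]
        gcongr
        exact (Real.sqrt_le_sqrt (sum_sq_sqrtMulHarmonic_sub_le #P)).trans_eq (Real.sqrt_sq hH)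
    _ = _ := by ring

lemma sum_sum_adjMatrix_mul_mul_le_min [DecidableEq V] [Nonempty V] (P Q : Finset V)
    {x : V → ℝ} (hx : 0 ≤ x) :
    ∑ u ∈ P, ∑ v ∈ Q, G.adjMatrix ℝ u v * x u * x v ≤
      α * ((harmonic (min #P #Q) + 3) / 2) * √(∑ u ∈ P, x u ^ 2) * √(∑ v ∈ Q, x v ^ 2) := by
  rcases le_total #P #Q with hPQ | hQP
  · rw [min_eq_left hPQ]
    exact sum_sum_adjMatrix_mul_mul_le G hα hα0 P Q (fun v _ => hx v) x
  · rw [min_eq_right hQP, sum_comm (f := fun u v => G.adjMatrix ℝ u v * x u * x v)]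
    calc _ = ∑ v ∈ Q, ∑ u ∈ P, G.adjMatrix ℝ v u * x v * x u :=
          sum_congr rfl fun v _ => sum_congr rfl fun u _ => by
            rw [G.isSymm_adjMatrix.apply v u]; ring
      _ ≤ _ := sum_sum_adjMatrix_mul_mul_le G hα hα0 Q P (fun v _ => hx v) x
      _ = _ := by ring

end DegreeBounds

section Bipartite

variable [Fintype V] {U W : Finset V} (hdisj : Disjoint U W)
  (hcover : ∀ v : V, v ∈ U ∨ v ∈ W)
  (hbip : ∀ a b, G.Adj a b → (a ∈ U ∧ b ∈ W) ∨ (a ∈ W ∧ b ∈ U))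
include hdisj hcover hbip

lemma dotProduct_adjMatrix_mulVec_self_of_bipartite [DecidableEq V] [DecidableRel G.Adj]
    (x : V → ℝ) :
    x ⬝ᵥ G.adjMatrix ℝ *ᵥ x = 2 * ∑ u ∈ U, ∑ w ∈ W, G.adjMatrix ℝ u w * x u * x w := by
  have huniv : U ∪ W = univ := eq_univ_of_forall fun v => mem_union.2 (hcover v)
  have hrow : ∀ {P Q : Finset V}, (∀ a b, G.Adj a b → a ∈ P → b ∈ Q) → ∀ a ∈ P,
      ∑ b, G.adjMatrix ℝ a b * x a * x b = ∑ b ∈ Q, G.adjMatrix ℝ a b * x a * x b := by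
    intro P Q hPQ a ha
    refine (sum_subset (subset_univ Q) fun b _ hb => ?_).symm
    rw [adjMatrix_apply, if_neg fun hab => hb (hPQ a b hab ha), zero_mul, zero_mul]
  have hUW : ∀ a b, G.Adj a b → a ∈ U → b ∈ W := fun a b hab ha =>
    ((hbip a b hab).resolve_right fun h => Finset.disjoint_left.1 hdisj ha h.1).2
  have hWU : ∀ a b, G.Adj a b → a ∈ W → b ∈ U := fun a b hab ha =>
    ((hbip a b hab).resolve_left fun h => Finset.disjoint_left.1 hdisj h.1 ha).2
  calc x ⬝ᵥ G.adjMatrix ℝ *ᵥ x = ∑ a, ∑ b, G.adjMatrix ℝ a b * x a * x b := by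
        simp only [dotProduct, mulVec, mul_sum]
        exact sum_congr rfl fun a _ => sum_congr rfl fun b _ => by ring
    _ = ∑ a ∈ U, ∑ b, G.adjMatrix ℝ a b * x a * x b +
          ∑ a ∈ W, ∑ b, G.adjMatrix ℝ a b * x a * x b := by rw [← sum_union hdisj, huniv]
    _ = ∑ a ∈ U, ∑ b ∈ W, G.adjMatrix ℝ a b * x a * x b +
          ∑ a ∈ W, ∑ b ∈ U, G.adjMatrix ℝ a b * x a * x b := by
        rw [sum_congr rfl (hrow hUW), sum_congr rfl (hrow hWU)]
    _ = _ := by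
        rw [sum_comm (s := W), two_mul]
        congr 1
        exact sum_congr rfl fun a _ => sum_congr rfl fun b _ => by
          rw [G.isSymm_adjMatrix.apply a b]; ring

lemma lamMax_le_MG_mul_of_bipartite [Nonempty V] :
    lamMax G ≤ MG G * ((harmonic (min #U #W) + 3) / 2) := by
  classical
  obtain ⟨x, hx0, hx1, hx_top⟩ :=
    (G.isHermitian_adjMatrix ℝ).exists_nonneg_sSup_spectrum_le G.adjMatrix_nonneg
  set a := √(∑ u ∈ U, x u ^ 2)
  set b := √(∑ w ∈ W, x w ^ 2)
  have hab : a ^ 2 + b ^ 2 = 1 := by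
    rw [Real.sq_sqrt (by positivity), Real.sq_sqrt (by positivity), ← sum_union hdisj,
      eq_univ_of_forall fun v => mem_union.2 (hcover v), ← hx1]
    simp only [dotProduct, sq]
  have hC : 0 ≤ MG G * ((harmonic (min #U #W) + 3) / 2) := by
    have := harmonic_nonneg (min #U #W)
    have := G.MG_nonneg
    positivity
  calc lamMax G ≤ x ⬝ᵥ G.adjMatrix ℝ *ᵥ x := hx_top
    _ = 2 * ∑ u ∈ U, ∑ w ∈ W, G.adjMatrix ℝ u w * x u * x w :=
        G.dotProduct_adjMatrix_mulVec_self_of_bipartite hdisj hcover hbip x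
    _ ≤ 2 * (MG G * ((harmonic (min #U #W) + 3) / 2) * a * b) := by
        gcongr
        exact G.sum_sum_adjMatrix_mul_mul_le_min G.eXY_le_MG_mul_sqrt G.MG_nonneg U W hx0
    _ ≤ MG G * ((harmonic (min #U #W) + 3) / 2) := by
        nlinarith [sq_nonneg (a - b)]

end Bipartite

end SimpleGraph

theorem statement10_general {V : Type*} [Fintype V] (G : SimpleGraph V)
    (U W : Finset V) (hU : U.Nonempty)
    (hdisj : Disjoint U W) (hcover : ∀ v : V, v ∈ U ∨ v ∈ W)
    (hbip : ∀ a b, G.Adj a b → (a ∈ U ∧ b ∈ W) ∨ (a ∈ W ∧ b ∈ U)) :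
    MG G ≤ lamMax G ∧
      lamMax G ≤ ((1 / 2 : ℝ) * Real.log ((min U.card W.card : ℕ) : ℝ) + 2) * MG G := by
  have : Nonempty V := hU.to_type
  refine ⟨G.MG_le_lamMax, (G.lamMax_le_MG_mul_of_bipartite hdisj hcover hbip).trans ?_⟩
  rw [mul_comm]
  gcongr
  · exact G.MG_nonneg
  · linarith [harmonic_le_one_add_log (min #U #W)]

/-- Corollary: for a bipartite graph with partite sets `U`, `W`, with at least one edge,
and `n = min{|U|, |W|}`, `M(G) ≤ λmax(G) ≤ ((1/2)·log n + 2)·M(G)`. -/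
theorem statement10 {V : Type*} [Fintype V] (G : SimpleGraph V)
    (U W : Finset V) (hU : U.Nonempty) (hW : W.Nonempty)
    (hdisj : Disjoint U W) (hcover : ∀ v : V, v ∈ U ∨ v ∈ W)
    (hbip : ∀ a b, G.Adj a b → (a ∈ U ∧ b ∈ W) ∨ (a ∈ W ∧ b ∈ U))
    (hedge : ∃ a b, G.Adj a b) :
    MG G ≤ lamMax G ∧
      lamMax G ≤ ((1 / 2 : ℝ) * Real.log ((min U.card W.card : ℕ) : ℝ) + 2) * MG G :=
  statement10_general G U W hU hdisj hcover hbip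
end

section
/- Let n ≥ 1 be an integer. For any vector z ∈ ℝⁿ with non-negative coordinates, there exists a non-zero vector δ ∈ {0,1}ⁿ such that ⟨z, δ⟩ ≥ (2/√(log n + 4))·‖z‖·‖δ‖, where ⟨·,·⟩ is the standard inner product and ‖·‖ is the Euclidean norm on ℝⁿ. -/
/-!
Let `A` be a non-empty set of coordinates maximising `M = (∑_{i ∈ A} zᵢ) / √|A|` and let `δ` be its
indicator vector, so that `⟨z, δ⟩ = M ‖δ‖` and `∑_{i ∈ B} zᵢ ≤ M √|B|` for every `B`. Applied to the
sets of the `k` largest coordinates `z₍₀₎ ≥ z₍₁₎ ≥ ⋯`, this says that the partial sums of `z₍ⱼ₎` are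
dominated by those of `tⱼ = M (√(j + 1) - √j)`. Both sequences are non-increasing and non-negative,
so Abel summation gives `‖z‖² ≤ ∑ tⱼ² = M² ∑ (√(j + 1) - √j)²`, and
`(√(j + 1) - √j)² ≤ (log (j + 1) - log j) / 4` (from `log (b / a) ≥ 2 (b - a) / (b + a)`)
telescopes to `‖z‖² ≤ M² (log n + 4) / 4`.
-/

open Finset Real
open scoped RealInnerProductSpace

theorem two_mul_le_log_one_add_sub_log_one_sub {x : ℝ} (hx0 : 0 ≤ x) (hx1 : x < 1) :
    2 * x ≤ log (1 + x) - log (1 - x) := by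
  have hsum := hasSum_log_sub_log_of_abs_lt_one (abs_lt.2 ⟨by linarith, hx1⟩)
  simpa using le_hasSum hsum 0 fun k _ ↦ by positivity

theorem sq_sqrt_add_one_sub_sqrt_le {t : ℝ} (ht : 0 < t) :
    (√(t + 1) - √t) ^ 2 ≤ (log (t + 1) - log t) / 4 := by
  set a := √t
  set b := √(t + 1)
  have ha : 0 < a := sqrt_pos.2 ht
  have hab : a < b := sqrt_lt_sqrt ht.le (by linarith)
  have ha2 : a ^ 2 = t := sq_sqrt ht.le
  have hb2 : b ^ 2 = t + 1 := sq_sqrt (by linarith)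
  -- with `x = (b - a)²` one has `(1 + x) / (1 - x) = b / a`
  have hplus : 1 + (b - a) ^ 2 = 2 * b * (b - a) := by nlinarith
  have hminus : 1 - (b - a) ^ 2 = 2 * a * (b - a) := by nlinarith
  have hlog := two_mul_le_log_one_add_sub_log_one_sub (sq_nonneg (b - a))
    (by nlinarith [mul_pos ha (sub_pos.2 hab)])
  have hba : 0 < b - a := sub_pos.2 hab
  rw [hplus, hminus, log_mul (by positivity) hba.ne', log_mul (by positivity) hba.ne',
    log_mul two_ne_zero (by positivity), log_mul two_ne_zero ha.ne', log_sqrt (by linarith),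
    log_sqrt ht.le] at hlog
  linarith

theorem sum_range_sq_sqrt_succ_sub_sqrt_le {n : ℕ} (hn : 1 ≤ n) :
    ∑ j ∈ range n, (√(j + 1) - √j) ^ 2 ≤ 1 + log n / 4 := by
  obtain ⟨m, rfl⟩ := Nat.exists_eq_add_of_le' hn
  have htail : ∑ j ∈ range m, (√((j + 1 : ℕ) + 1) - √(j + 1 : ℕ)) ^ 2
      ≤ ∑ j ∈ range m, (log (j + 1 + 1 : ℕ) - log (j + 1 : ℕ)) / 4 :=
    sum_le_sum fun j _ ↦ by
      exact_mod_cast sq_sqrt_add_one_sub_sqrt_le (t := (j + 1 : ℕ)) (by positivity)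
  rw [← sum_div, sum_range_sub (fun j ↦ log (j + 1 : ℕ))] at htail
  rw [sum_range_succ']
  push_cast at htail ⊢
  simp only [log_one, sub_zero, sqrt_zero] at htail ⊢
  linarith

theorem sum_range_mul_nonpos_of_antitone {c d : ℕ → ℝ} {n : ℕ} (hc : Antitone c)
    (hc0 : ∀ j, 0 ≤ c j) (hd : ∀ k ≤ n, ∑ j ∈ range k, d j ≤ 0) :
    ∑ j ∈ range n, c j * d j ≤ 0 := by
  have hparts := sum_range_by_parts c d n
  simp only [smul_eq_mul] at hparts
  have hlast : c (n - 1) * ∑ j ∈ range n, d j ≤ 0 :=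
    mul_nonpos_of_nonneg_of_nonpos (hc0 _) (hd n le_rfl)
  have hsteps : 0 ≤ ∑ i ∈ range (n - 1), (c (i + 1) - c i) * ∑ j ∈ range (i + 1), d j :=
    sum_nonneg fun i hi ↦ mul_nonneg_of_nonpos_of_nonpos
      (sub_nonpos.2 (hc (Nat.le_succ i))) (hd _ (by rw [mem_range] at hi; omega))
  linarith

theorem sum_range_sq_le_of_sum_range_le {W T : ℕ → ℝ} {n : ℕ} (hW : Antitone W) (hT : Antitone T)
    (hW0 : ∀ j, 0 ≤ W j) (hT0 : ∀ j, 0 ≤ T j)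
    (hWT : ∀ k ≤ n, ∑ j ∈ range k, W j ≤ ∑ j ∈ range k, T j) :
    ∑ j ∈ range n, W j ^ 2 ≤ ∑ j ∈ range n, T j ^ 2 := by
  have h := sum_range_mul_nonpos_of_antitone (c := W + T) (d := W - T) (hW.add hT)
    (fun j ↦ add_nonneg (hW0 j) (hT0 j)) fun k hk ↦ by
      simpa only [Pi.sub_apply, sum_sub_distrib, sub_nonpos] using hWT k hk
  simp only [Pi.add_apply, Pi.sub_apply, ← sq_sub_sq, sum_sub_distrib, sub_nonpos] at h
  exact h

theorem antitone_sqrt_succ_sub_sqrt : Antitone fun j : ℕ ↦ √(j + 1) - √j := by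
  have h (j : ℕ) : √(j + 1) - √j = (√(j + 1) + √j)⁻¹ := by
    have : 0 < √(j + 1) + √j := by positivity
    field_simp
    rw [mul_comm, ← sq_sub_sq, sq_sqrt (by positivity), sq_sqrt (by positivity)]
    ring
  intro i j hij
  simp only [h]
  gcongr

theorem sum_range_sq_le_of_sum_range_le_mul_sqrt {W : ℕ → ℝ} {M : ℝ} {n : ℕ} (hW : Antitone W)
    (hW0 : ∀ j, 0 ≤ W j) (hM : 0 ≤ M) (hS : ∀ k ≤ n, ∑ j ∈ range k, W j ≤ M * √k) :
    ∑ j ∈ range n, W j ^ 2 ≤ M ^ 2 * ∑ j ∈ range n, (√(j + 1) - √j) ^ 2 := by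
  have hT : Antitone fun j : ℕ ↦ M * (√(j + 1) - √j) :=
    fun i j hij ↦ mul_le_mul_of_nonneg_left (antitone_sqrt_succ_sub_sqrt hij) hM
  have hT0 (j : ℕ) : 0 ≤ M * (√(j + 1) - √j) :=
    mul_nonneg hM (sub_nonneg.2 (sqrt_le_sqrt (by linarith)))
  have hTsum (k : ℕ) : ∑ j ∈ range k, M * (√(j + 1) - √j) = M * √k := by
    have := sum_range_sub (fun j : ℕ ↦ √j) k
    push_cast at this
    rw [← mul_sum, this, sqrt_zero, sub_zero]
  calc ∑ j ∈ range n, W j ^ 2 ≤ ∑ j ∈ range n, (M * (√(j + 1) - √j)) ^ 2 :=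
        sum_range_sq_le_of_sum_range_le hW hT hW0 hT0 fun k hk ↦ (hTsum k).symm ▸ hS k hk
    _ = M ^ 2 * ∑ j ∈ range n, (√(j + 1) - √j) ^ 2 := by simp only [mul_pow, mul_sum]

theorem sum_sq_le_of_forall_sum_le_mul_sqrt {ι : Type*} [Fintype ι] {z : ι → ℝ} {M : ℝ}
    (hz : ∀ i, 0 ≤ z i) (hM : 0 ≤ M) (hA : ∀ A : Finset ι, ∑ i ∈ A, z i ≤ M * √(#A)) :
    ∑ i, z i ^ 2 ≤ M ^ 2 * ∑ j ∈ range (Fintype.card ι), (√(j + 1) - √j) ^ 2 := by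
  set n := Fintype.card ι
  set e := Fintype.equivFin ι
  set σ : Fin n ≃ ι := (Tuple.sort fun i ↦ -z (e.symm i)).trans e.symm
  have hσ : Antitone (z ∘ σ) := fun i j hij ↦
    neg_le_neg_iff.1 (Tuple.monotone_sort (fun i ↦ -z (e.symm i)) hij)
  set W : ℕ → ℝ := fun j ↦ if h : j < n then z (σ ⟨j, h⟩) else 0
  have hWσ (i : Fin n) : W i = z (σ i) := dif_pos i.isLt
  have hW0 (j : ℕ) : 0 ≤ W j := by
    unfold W; split_ifs
    exacts [hz _, le_rfl]
  have hW : Antitone W := by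
    intro i j hij
    by_cases hj : j < n
    · simp only [W, dif_pos hj, dif_pos (hij.trans_lt hj)]
      exact hσ (Fin.mk_le_mk.2 hij)
    · simpa only [W, dif_neg hj] using hW0 i
  have hprefix (k : ℕ) (hk : k ≤ n) : ∑ j ∈ range k, W j ≤ M * √k := by
    have := hA (univ.map ((Fin.castLEEmb hk).trans σ.toEmbedding))
    rw [sum_map, card_map, card_univ, Fintype.card_fin] at this
    rw [sum_range]
    convert this using 2 with i
    exact hWσ (Fin.castLE hk i)
  calc ∑ i, z i ^ 2 = ∑ j ∈ range n, W j ^ 2 := by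
        rw [sum_range, ← σ.sum_comp]; simp only [hWσ]
    _ ≤ _ := sum_range_sq_le_of_sum_range_le_mul_sqrt hW hW0 hM hprefix

theorem exists_nonempty_finset_forall_sum_le_mul_sqrt {ι : Type*} [Fintype ι] [Nonempty ι]
    (z : ι → ℝ) : ∃ A : Finset ι, A.Nonempty ∧
      ∀ B : Finset ι, ∑ i ∈ B, z i ≤ (∑ i ∈ A, z i) / √(#A) * √(#B) := by
  obtain ⟨A, hA, hmax⟩ := exists_max_image {A : Finset ι | A.Nonempty}
    (fun A ↦ (∑ i ∈ A, z i) / √(#A)) ⟨{Classical.arbitrary ι}, by simp⟩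
  refine ⟨A, (mem_filter.1 hA).2, fun B ↦ ?_⟩
  rcases B.eq_empty_or_nonempty with rfl | hB
  · simp
  · have hBpos : 0 < √(#B) := sqrt_pos.2 (by exact_mod_cast hB.card_pos)
    exact (div_le_iff₀ hBpos).1 (hmax B (by simpa using hB))

def indicatorVector {ι : Type*} [DecidableEq ι] (A : Finset ι) : EuclideanSpace ℝ ι :=
  WithLp.toLp 2 fun i ↦ if i ∈ A then 1 else 0

section indicatorVector

variable {ι : Type*} [DecidableEq ι] (A : Finset ι)

theorem inner_indicatorVector [Fintype ι] (z : EuclideanSpace ℝ ι) :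
    ⟪z, indicatorVector A⟫ = ∑ i ∈ A, z i := by
  simp [PiLp.inner_apply, indicatorVector]

theorem norm_indicatorVector [Fintype ι] : ‖indicatorVector A‖ = √(#A) := by
  simp [EuclideanSpace.norm_eq, indicatorVector]

theorem indicatorVector_ne_zero {A : Finset ι} (hA : A.Nonempty) : indicatorVector A ≠ 0 := by
  obtain ⟨i, hi⟩ := hA
  intro h
  simpa [indicatorVector, hi] using congrArg (· i) h

theorem indicatorVector_apply_eq_zero_or_eq_one (i : ι) :
    indicatorVector A i = 0 ∨ indicatorVector A i = 1 := by
  by_cases hi : i ∈ A <;> simp [indicatorVector, hi]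

end indicatorVector

/-- Lemma 4: for any `z ∈ ℝⁿ` with non-negative coordinates there is a non-zero
`δ ∈ {0,1}ⁿ` with `⟨z,δ⟩ ≥ (2/√(log n + 4))·‖z‖·‖δ‖`. -/
theorem statement12 (n : ℕ) (hn : 1 ≤ n) (z : EuclideanSpace ℝ (Fin n))
    (hz : ∀ i, 0 ≤ z i) :
    ∃ δ : EuclideanSpace ℝ (Fin n), δ ≠ 0 ∧ (∀ i, δ i = 0 ∨ δ i = 1) ∧
      ⟪z, δ⟫ ≥ (2 / Real.sqrt (Real.log n + 4)) * (‖z‖ * ‖δ‖) := by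
  have : Nonempty (Fin n) := ⟨⟨0, hn⟩⟩
  obtain ⟨A, hA, hmax⟩ := exists_nonempty_finset_forall_sum_le_mul_sqrt z
  set M := (∑ i ∈ A, z i) / √(#A)
  have hAsqrt : 0 < √(#A) := sqrt_pos.2 (by exact_mod_cast hA.card_pos)
  have hM : 0 ≤ M := div_nonneg (sum_nonneg fun i _ ↦ hz i) hAsqrt.le
  have hL : 0 < log n + 4 := by linarith [log_nonneg (Nat.one_le_cast.2 hn : (1 : ℝ) ≤ n)]
  have hnorm : ‖z‖ ^ 2 ≤ M ^ 2 * ((log n + 4) / 4) := by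
    calc ‖z‖ ^ 2 = ∑ i, z i ^ 2 := by simp [EuclideanSpace.norm_sq_eq]
      _ ≤ M ^ 2 * ∑ j ∈ range n, (√(j + 1) - √j) ^ 2 := by
        simpa using sum_sq_le_of_forall_sum_le_mul_sqrt hz hM hmax
      _ ≤ M ^ 2 * ((log n + 4) / 4) := by
        gcongr; linarith [sum_range_sq_sqrt_succ_sub_sqrt_le hn]
  have hratio : 2 / √(log n + 4) * ‖z‖ ≤ M := by
    rw [div_mul_eq_mul_div, div_le_iff₀ (sqrt_pos.2 hL)]
    refine (pow_le_pow_iff_left₀ (by positivity) (by positivity) two_ne_zero).1 ?_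
    rw [mul_pow, mul_pow, sq_sqrt hL.le]
    linarith
  refine ⟨indicatorVector A, indicatorVector_ne_zero hA,
    indicatorVector_apply_eq_zero_or_eq_one A, ?_⟩
  rw [inner_indicatorVector, norm_indicatorVector, ← div_mul_cancel₀ (∑ i ∈ A, z i) hAsqrt.ne',
    ← mul_assoc]
  exact mul_le_mul_of_nonneg_right hratio hAsqrt.le
end

section
/- Let n, Δ ≥ 1 be integers. For any vector z ∈ ℝⁿ all of whose coordinates are integers in the interval [0, Δ], there exists a non-zero vector δ ∈ {0,1}ⁿ such that ⟨z, δ⟩ ≥ (1/√(log Δ + 1))·‖z‖·‖δ‖. -/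
/-!
Write `z i = f i` and, for a threshold `t`, let `δₜ` be the indicator vector of `{i | t ≤ f i}`,
so that `⟪z, δₜ⟫ = Sₜ := ∑_{t ≤ f i} f i` and `‖δₜ‖² = aₜ := #{i | t ≤ f i}`. Counting layer by
layer, `‖z‖² = ∑_{t=1}^{Δ} (2 Sₜ - (2t - 1) aₜ)`. If `Sₜ² ≤ C aₜ` for every `t`, AM-GM bounds the
`t`-th term by `C / (2t - 1) ≤ C / t`, whence `‖z‖² ≤ C H_Δ ≤ C (log Δ + 1)`. Taking for `C` the
largest ratio `⟪z, δₜ⟫² / ‖δₜ‖²`, the maximising `δₜ` is the required vector.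
-/

open scoped RealInnerProductSpace
open Finset

lemma sq_eq_sum_Icc (m : ℕ) : (m : ℝ) ^ 2 = ∑ t ∈ Icc 1 m, (2 * ((m : ℝ) - t) + 1) := by
  induction m with
  | zero => simp
  | succ m ih =>
    rw [sum_Icc_succ_top (by omega)]
    have hshift : ∀ t ∈ Icc 1 m, 2 * ((↑(m + 1) : ℝ) - t) + 1 = (2 * ((m : ℝ) - t) + 1) + 2 := by
      intro t _
      push_cast
      ring
    rw [sum_congr rfl hshift, sum_add_distrib, ← ih]
    simp only [Nat.cast_add, Nat.cast_one, sum_const, Nat.card_Icc, add_tsub_cancel_right,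
      nsmul_eq_mul, sub_self, mul_zero, zero_add]
    ring

lemma two_mul_sub_mul_le_div {S a C k : ℝ} (hk : 0 < k) (hC : 0 ≤ C) (ha : 0 ≤ a)
    (h : S ^ 2 ≤ C * a) : 2 * S - k * a ≤ C / k := by
  rw [le_div_iff₀ hk]
  rcases ha.eq_or_lt with rfl | ha
  · have hS : S = 0 := pow_eq_zero_iff two_ne_zero |>.1 (le_antisymm (by simpa using h) (sq_nonneg S))
    simp [hS, hC]
  · nlinarith [sq_nonneg (S - k * a)]

lemma div_sqrt_le_of_sq_le_mul_sq {a b L : ℝ} (hL : 0 < L) (hb : 0 ≤ b) (h : a ^ 2 ≤ L * b ^ 2) :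
    a / √L ≤ b := by
  rw [div_le_iff₀ (Real.sqrt_pos.2 hL)]
  calc a ≤ |a| := le_abs_self a
    _ ≤ √(L * b ^ 2) := Real.abs_le_sqrt h
    _ = b * √L := by rw [Real.sqrt_mul hL.le, Real.sqrt_sq hb, mul_comm]

lemma inner_sq_le_mul_norm_sq_of_div_le {E : Type*} [NormedAddCommGroup E] [InnerProductSpace ℝ E]
    {x y : E} {M : ℝ} (h : ⟪x, y⟫ ^ 2 / ‖y‖ ^ 2 ≤ M) : ⟪x, y⟫ ^ 2 ≤ M * ‖y‖ ^ 2 := by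
  rcases eq_or_ne y 0 with rfl | hy
  · simp
  · rwa [div_le_iff₀ (by positivity)] at h

section Superlevel

variable {ι : Type*}

def superlevelIndicator (f : ι → ℕ) (t : ℕ) : EuclideanSpace ℝ ι :=
  WithLp.toLp 2 fun i => if t ≤ f i then 1 else 0

lemma superlevelIndicator_apply_eq_zero_or_one (f : ι → ℕ) (t : ℕ) (i : ι) :
    superlevelIndicator f t i = 0 ∨ superlevelIndicator f t i = 1 := by
  by_cases h : t ≤ f i <;> simp [superlevelIndicator, h]

variable [Fintype ι]

def superlevel (f : ι → ℕ) (t : ℕ) : Finset ι := {i | t ≤ f i}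

lemma sum_sq_eq_sum_superlevel (f : ι → ℕ) {Δ : ℕ} (hf : ∀ i, f i ≤ Δ) :
    ∑ i, (f i : ℝ) ^ 2 =
      ∑ t ∈ Icc 1 Δ, (2 * ∑ i ∈ superlevel f t, (f i : ℝ) - (2 * t - 1) * #(superlevel f t)) := by
  have hterm : ∀ t : ℕ, 2 * ∑ i ∈ superlevel f t, (f i : ℝ) - (2 * t - 1) * #(superlevel f t)
      = ∑ i, if t ≤ f i then 2 * ((f i : ℝ) - t) + 1 else 0 := by
    intro t
    rw [← sum_filter, mul_comm (2 * (t : ℝ) - 1), ← nsmul_eq_mul, ← sum_const, mul_sum,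
      ← sum_sub_distrib]
    exact sum_congr rfl fun i _ => by ring
  simp_rw [hterm]
  rw [sum_comm]
  refine sum_congr rfl fun i _ => ?_
  rw [← sum_filter, sq_eq_sum_Icc]
  congr 1
  ext t
  simp only [mem_filter, mem_Icc]
  have := hf i
  omega

theorem sum_sq_le_mul_harmonic (f : ι → ℕ) {Δ : ℕ} (hf : ∀ i, f i ≤ Δ) {C : ℝ} (hC : 0 ≤ C)
    (h : ∀ t ∈ Icc 1 Δ, (∑ i ∈ superlevel f t, (f i : ℝ)) ^ 2 ≤ C * #(superlevel f t)) :
    ∑ i, (f i : ℝ) ^ 2 ≤ C * harmonic Δ := by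
  rw [sum_sq_eq_sum_superlevel f hf, harmonic_eq_sum_Icc]
  push_cast
  rw [mul_sum]
  refine sum_le_sum fun t ht => ?_
  have ht1 : (1 : ℝ) ≤ t := by exact_mod_cast (mem_Icc.1 ht).1
  calc _ ≤ C / (2 * t - 1) := two_mul_sub_mul_le_div (by linarith) hC (by positivity) (h t ht)
    _ ≤ C / t := div_le_div_of_nonneg_left hC (by linarith) (by linarith)
    _ = C * (t : ℝ)⁻¹ := div_eq_mul_inv _ _

variable {f : ι → ℕ} {z : EuclideanSpace ℝ ι}

lemma inner_superlevelIndicator (hz : ∀ i, z i = f i) (t : ℕ) :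
    ⟪z, superlevelIndicator f t⟫ = ∑ i ∈ superlevel f t, (f i : ℝ) := by
  simp [superlevelIndicator, superlevel, PiLp.inner_apply, hz, sum_filter]

lemma norm_sq_superlevelIndicator (f : ι → ℕ) (t : ℕ) :
    ‖superlevelIndicator f t‖ ^ 2 = #(superlevel f t) := by
  simp [superlevelIndicator, superlevel, EuclideanSpace.norm_sq_eq, apply_ite, sum_boole]

lemma norm_sq_eq_sum (hz : ∀ i, z i = f i) : ‖z‖ ^ 2 = ∑ i, (f i : ℝ) ^ 2 := by
  simp [EuclideanSpace.norm_sq_eq, hz]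

theorem norm_sq_le_mul_harmonic (hz : ∀ i, z i = f i) {Δ : ℕ} (hf : ∀ i, f i ≤ Δ) {C : ℝ}
    (hC : 0 ≤ C)
    (h : ∀ t ∈ Icc 1 Δ, ⟪z, superlevelIndicator f t⟫ ^ 2 ≤ C * ‖superlevelIndicator f t‖ ^ 2) :
    ‖z‖ ^ 2 ≤ C * harmonic Δ := by
  rw [norm_sq_eq_sum hz]
  refine sum_sq_le_mul_harmonic f hf hC fun t ht => ?_
  simpa [inner_superlevelIndicator hz, norm_sq_superlevelIndicator] using h t ht

end Superlevel

theorem statement13_general (n Δ : ℕ) (hn : 1 ≤ n)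
    (z : EuclideanSpace ℝ (Fin n)) (hz : ∀ i, ∃ m : ℕ, m ≤ Δ ∧ z i = m) :
    ∃ δ : EuclideanSpace ℝ (Fin n), δ ≠ 0 ∧ (∀ i, δ i = 0 ∨ δ i = 1) ∧
      ⟪z, δ⟫ ≥ (1 / Real.sqrt (Real.log Δ + 1)) * (‖z‖ * ‖δ‖) := by
  choose f hfΔ hfz using hz
  by_cases hz0 : z = 0
  · refine ⟨EuclideanSpace.single ⟨0, hn⟩ 1, by simp, fun i => ?_, by simp [hz0]⟩
    by_cases h : i = ⟨0, hn⟩ <;> simp [h]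
  obtain ⟨i₀, hi₀⟩ : ∃ i, z i ≠ 0 := by
    by_contra! h
    exact hz0 (by ext i; simp [h])
  have hne : (Icc 1 Δ).Nonempty :=
    ⟨f i₀, mem_Icc.2 ⟨Nat.one_le_iff_ne_zero.2 (by simpa [hfz] using hi₀), hfΔ i₀⟩⟩
  obtain ⟨t, -, hmax⟩ := exists_max_image (Icc 1 Δ)
    (fun t => ⟪z, superlevelIndicator f t⟫ ^ 2 / ‖superlevelIndicator f t‖ ^ 2) hne
  set δ := superlevelIndicator f t
  set M := ⟪z, δ⟫ ^ 2 / ‖δ‖ ^ 2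
  have hL : 0 < Real.log Δ + 1 := by positivity
  have hbound : ‖z‖ ^ 2 ≤ M * (Real.log Δ + 1) :=
    calc ‖z‖ ^ 2 ≤ M * harmonic Δ := norm_sq_le_mul_harmonic hfz hfΔ (by positivity)
          fun s hs => inner_sq_le_mul_norm_sq_of_div_le (hmax s hs)
      _ ≤ M * (Real.log Δ + 1) := by
        gcongr
        linarith [harmonic_le_one_add_log Δ]
  have hδ : δ ≠ 0 := by
    rintro hδ
    have : ‖z‖ ^ 2 ≤ 0 := by simpa [M, hδ] using hbound
    exact hz0 (by simpa using this)
  refine ⟨δ, hδ, superlevelIndicator_apply_eq_zero_or_one f t, ?_⟩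
  rw [ge_iff_le, one_div_mul_eq_div]
  refine div_sqrt_le_of_sq_le_mul_sq hL (by rw [inner_superlevelIndicator hfz]; positivity) ?_
  have hδpos : 0 < ‖δ‖ ^ 2 := by positivity
  calc (‖z‖ * ‖δ‖) ^ 2 = ‖z‖ ^ 2 * ‖δ‖ ^ 2 := mul_pow _ _ _
    _ ≤ M * (Real.log Δ + 1) * ‖δ‖ ^ 2 := by gcongr
    _ = (Real.log Δ + 1) * ⟪z, δ⟫ ^ 2 := by simp only [M]; field_simp

/-- Lemma 5: for any integer vector `z ∈ [0,Δ]ⁿ` there is a non-zero `δ ∈ {0,1}ⁿ` with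
`⟨z,δ⟩ ≥ (1/√(log Δ + 1))·‖z‖·‖δ‖`. -/
theorem statement13 (n Δ : ℕ) (hn : 1 ≤ n) (hΔ : 1 ≤ Δ)
    (z : EuclideanSpace ℝ (Fin n)) (hz : ∀ i, ∃ m : ℕ, m ≤ Δ ∧ z i = m) :
    ∃ δ : EuclideanSpace ℝ (Fin n), δ ≠ 0 ∧ (∀ i, δ i = 0 ∨ δ i = 1) ∧
      ⟪z, δ⟫ ≥ (1 / Real.sqrt (Real.log Δ + 1)) * (‖z‖ * ‖δ‖) :=
  statement13_general n Δ hn z hz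
end

section
/- Let n ≥ 1 be an integer. For any vector z ∈ ℝⁿ with non-negative coordinates, there exists a non-zero vector δ ∈ {0,1}ⁿ such that ⟨z, δ⟩ ≥ (1/√(8·(log ρ(z) + 1)))·‖z‖·‖δ‖. -/
/-!
Sort the coordinates of `z` as `t₀ ≥ t₁ ≥ ⋯` and let `K` be the index in the definition of
`ρ(z)`, so that `t₀² + ⋯ + t_K² ≥ ‖z‖² / 2` and `ρ(z) = t₀ / t_K`. Take `δ` to be the indicator of
the `j + 1` largest coordinates, so that `⟨z, δ⟩ = t₀ + ⋯ + t_j` and `‖δ‖ = √(j + 1)`.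
If no `j ≤ K` works, then with `B = ‖z‖ / √(8 (log ρ + 1))` monotonicity gives
`t_j² (j + 1) ≤ B²` for every `j ≤ K`. Bounding `t_i²` by `t₀²` for `i < B² / t₀²` and by
`B² / (i + 1)` beyond, a harmonic sum estimate yields `t₀² + ⋯ + t_K² ≤ B² (2 + 2 log ρ) = ‖z‖² / 4`,
a contradiction.
-/

open scoped RealInnerProductSpace

-- `rho d = ρ(d)` for a finite sequence `d` with non-negative terms: with `d₁ ≥ … ≥ dₙ`
-- the non-increasing rearrangement of `d` and `k` the smallest index (1-based) with
-- `d₁² + … + d_k² ≥ d_{k+1}² + … + dₙ²`, `ρ(d) = d₁ / d_k` if `d_k ≠ 0`, else `ρ(d) = 1`.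
open Classical in
noncomputable def rho {n : ℕ} (d : Fin n → ℝ) : ℝ :=
  if hn : 0 < n then
    -- `s` is the non-increasing rearrangement of `d`
    let s : Fin n → ℝ := fun i => d (Tuple.sort d i.rev)
    -- `k` is the smallest (0-based) index with `s 0 ^ 2 + … + s k ^ 2 ≥` the remaining sum
    let k : Fin n := ⟨min (sInf {k : ℕ |
        ∑ i : Fin n, (if k < (i : ℕ) then s i ^ 2 else 0) ≤
        ∑ i : Fin n, (if (i : ℕ) ≤ k then s i ^ 2 else 0)}) (n - 1),
      lt_of_le_of_lt (min_le_right _ _) (Nat.sub_lt hn one_pos)⟩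
    if s k ≠ 0 then s ⟨0, hn⟩ / s k else 1
  else 1

open Finset Real

section Sequences

theorem sum_Ico_inv_succ_le_log_sub_log {a m : ℕ} (ha : 1 ≤ a) (ham : a ≤ m) :
    ∑ i ∈ Ico a m, 1 / ((i : ℝ) + 1) ≤ log m - log a := by
  rw [← sum_Ico_sub (fun i : ℕ => log i) ham]
  refine sum_le_sum fun i hi => ?_
  have hi : (0 : ℝ) < i := by
    have := (mem_Ico.mp hi).1
    exact_mod_cast (by omega : 0 < i)
  have := one_sub_inv_le_log_of_pos (x := ((i : ℝ) + 1) / i) (by positivity)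
  rw [log_div (by positivity) hi.ne', inv_div] at this
  push_cast
  calc 1 / ((i : ℝ) + 1) = 1 - i / (i + 1) := by field_simp; ring
    _ ≤ _ := this

theorem exists_nat_one_le_le_two_mul {x : ℝ} (hx : 1 ≤ x) :
    ∃ a : ℕ, 1 ≤ a ∧ (a : ℝ) ≤ x ∧ x ≤ 2 * a := by
  refine ⟨⌊x⌋₊, Nat.one_le_floor_iff _ |>.mpr hx, Nat.floor_le (by linarith), ?_⟩
  have h1 : (1 : ℝ) ≤ ⌊x⌋₊ := by exact_mod_cast Nat.one_le_floor_iff _ |>.mpr hx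
  linarith [Nat.lt_floor_add_one x]

variable {t : ℕ → ℝ} {K : ℕ}

theorem sum_Ico_sq_le_mul_log {C : ℝ} (hC : ∀ j ≤ K, t j ^ 2 * (j + 1) ≤ C) {a : ℕ} (ha : 1 ≤ a)
    (haK : a ≤ K + 1) : ∑ i ∈ Ico a (K + 1), t i ^ 2 ≤ C * (log (K + 1) - log a) := calc
  ∑ i ∈ Ico a (K + 1), t i ^ 2 ≤ ∑ i ∈ Ico a (K + 1), C * (1 / ((i : ℝ) + 1)) := by
    refine sum_le_sum fun i hi => ?_
    rw [mul_one_div, le_div_iff₀ (by positivity)]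
    exact hC i (by have := (mem_Ico.mp hi).2; omega)
  _ ≤ C * (log (K + 1) - log a) := by
    rw [← mul_sum]
    have hC0 : 0 ≤ C := (hC 0 (Nat.zero_le K)).trans' (by positivity)
    gcongr
    exact_mod_cast sum_Ico_inv_succ_le_log_sub_log ha haK

theorem sum_sq_le_of_sq_mul_succ_le (ht : Antitone t) (hK : 0 < t K) {C : ℝ}
    (hC : ∀ j ≤ K, t j ^ 2 * (j + 1) ≤ C) :
    ∑ i ∈ range (K + 1), t i ^ 2 ≤ C * (2 + 2 * log (t 0 / t K)) := by
  have htK : t K ≤ t 0 := ht (Nat.zero_le K)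
  have ht0 : 0 < t 0 := hK.trans_le htK
  have hlog : 0 ≤ log (t 0 / t K) := log_nonneg ((one_le_div hK).mpr htK)
  have hC0 : t 0 ^ 2 ≤ C := by simpa using hC 0 (Nat.zero_le K)
  have hCpos : 0 < C := (pow_pos ht0 2).trans_le hC0
  obtain ⟨a, ha, hax, hxa⟩ := exists_nat_one_le_le_two_mul ((one_le_div (by positivity)).mpr hC0)
  have haC : a * t 0 ^ 2 ≤ C := (le_div_iff₀ (by positivity)).mp hax
  have hCa : C ≤ 2 * a * t 0 ^ 2 := (div_le_iff₀ (by positivity)).mp hxa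
  have hhead : ∀ m ≤ a, m ≤ K + 1 → ∑ i ∈ range m, t i ^ 2 ≤ C := fun m hma hmK => calc
    ∑ i ∈ range m, t i ^ 2 ≤ #(range m) • t 0 ^ 2 := by
      refine sum_le_card_nsmul _ _ _ fun i hi => ?_
      have : i ≤ K := by have := mem_range.mp hi; omega
      exact pow_le_pow_left₀ (hK.le.trans (ht this)) (ht (Nat.zero_le i)) 2
    _ ≤ a * t 0 ^ 2 := by rw [card_range, nsmul_eq_mul]; gcongr
    _ ≤ C := haC
  rcases le_or_gt (K + 1) a with hKa | haK
  · calc ∑ i ∈ range (K + 1), t i ^ 2 ≤ C := hhead _ hKa le_rfl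
      _ ≤ C * (2 + 2 * log (t 0 / t K)) := by nlinarith
  have hratio : ((K : ℝ) + 1) / a ≤ 2 * (t 0 / t K) ^ 2 := by
    have := hC K le_rfl
    rw [div_le_iff₀ (by positivity), div_pow, mul_div_assoc', div_mul_eq_mul_div,
      le_div_iff₀ (by positivity)]
    nlinarith
  have hlog_sub : log (K + 1) - log a ≤ 1 + 2 * log (t 0 / t K) := calc
    log (K + 1) - log a = log (((K : ℝ) + 1) / a) := (log_div (by positivity) (by positivity)).symm
    _ ≤ log (2 * (t 0 / t K) ^ 2) := log_le_log (by positivity) hratio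
    _ = log 2 + 2 * log (t 0 / t K) := by
      rw [log_mul (by norm_num) (by positivity), log_pow]; norm_num
    _ ≤ 1 + 2 * log (t 0 / t K) := by linarith [log_two_lt_d9]
  rw [← sum_range_add_sum_Ico _ haK.le]
  linarith [hhead a le_rfl haK.le, sum_Ico_sq_le_mul_log hC ha haK.le,
    mul_le_mul_of_nonneg_left hlog_sub hCpos.le]

theorem sq_mul_succ_le_of_sum_lt (ht : Antitone t) {j : ℕ} (hj : 0 ≤ t j) {B : ℝ}
    (h : ∑ i ∈ range (j + 1), t i < B * √(j + 1)) : t j ^ 2 * (j + 1) ≤ B ^ 2 := by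
  have hmul : t j * (j + 1) ≤ ∑ i ∈ range (j + 1), t i := by
    simpa [mul_comm] using
      card_nsmul_le_sum (range (j + 1)) t (t j) fun i hi => ht (mem_range_succ_iff.mp hi)
  have hsq : (t j * (j + 1)) ^ 2 ≤ (B * √(j + 1)) ^ 2 :=
    pow_le_pow_left₀ (by positivity) (hmul.trans h.le) 2
  rw [mul_pow, mul_pow, sq_sqrt (by positivity)] at hsq
  exact le_of_mul_le_mul_right (by linarith) (by positivity : (0 : ℝ) < j + 1)

theorem exists_sum_range_ge (ht : Antitone t) (hK : 0 < t K) {N : ℝ}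
    (hN : N ^ 2 ≤ 2 * ∑ i ∈ range (K + 1), t i ^ 2) :
    ∃ j ≤ K, N / √(8 * (log (t 0 / t K) + 1)) * √(j + 1) ≤ ∑ i ∈ range (j + 1), t i := by
  by_contra! h
  have hlog : 0 ≤ log (t 0 / t K) := log_nonneg ((one_le_div hK).mpr (ht (Nat.zero_le K)))
  have hbound := sum_sq_le_of_sq_mul_succ_le ht hK fun j hj =>
    sq_mul_succ_le_of_sum_lt ht (hK.le.trans (ht hj)) (h j hj)
  rw [div_pow, sq_sqrt (by positivity)] at hbound
  have hB : N ^ 2 / (8 * (log (t 0 / t K) + 1)) * (2 + 2 * log (t 0 / t K)) = N ^ 2 / 4 := by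
    field_simp
    ring
  have hpos : t K ^ 2 ≤ ∑ i ∈ range (K + 1), t i ^ 2 :=
    single_le_sum (fun i _ => sq_nonneg (t i)) (self_mem_range_succ K)
  linarith [pow_pos hK 2]

theorem nonpos_of_minimal_of_eq_zero {S : ℝ} (hK : S ≤ 2 * ∑ i ∈ range (K + 1), t i ^ 2)
    (hmin : ∀ m < K, 2 * ∑ i ∈ range (m + 1), t i ^ 2 < S) (h0 : t K = 0) : S ≤ 0 := by
  cases K with
  | zero => simpa [h0] using hK
  | succ m =>
    rw [sum_range_succ, h0, zero_pow two_ne_zero, add_zero] at hK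
    linarith [hmin m m.lt_succ_self]

end Sequences

section Sorting

variable {n : ℕ}

noncomputable def descPerm (d : Fin n → ℝ) : Equiv.Perm (Fin n) :=
  Fin.revPerm.trans (Tuple.sort d)

/-- Extended by zero, so that it is antitone on all of `ℕ` when `d` is non-negative. -/
noncomputable def sortedDesc (d : Fin n → ℝ) (m : ℕ) : ℝ :=
  if h : m < n then d (descPerm d ⟨m, h⟩) else 0

theorem sortedDesc_coe (d : Fin n → ℝ) (i : Fin n) : sortedDesc d i = d (descPerm d i) := by
  simp [sortedDesc]

theorem sortedDesc_nonneg {d : Fin n → ℝ} (hd : ∀ i, 0 ≤ d i) (m : ℕ) : 0 ≤ sortedDesc d m := by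
  unfold sortedDesc
  split_ifs
  exacts [hd _, le_rfl]

theorem antitone_sortedDesc {d : Fin n → ℝ} (hd : ∀ i, 0 ≤ d i) : Antitone (sortedDesc d) := by
  intro k m hkm
  by_cases hm : m < n
  · rw [sortedDesc, dif_pos hm, sortedDesc, dif_pos (hkm.trans_lt hm)]
    exact Tuple.monotone_sort d (Fin.rev_le_rev.mpr (Fin.mk_le_mk.mpr hkm))
  · rw [sortedDesc, dif_neg hm]
    exact sortedDesc_nonneg hd k

theorem sum_ite_val_lt_eq_sum_range (f : ℕ → ℝ) {m : ℕ} (hm : m ≤ n) :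
    ∑ i : Fin n, (if (i : ℕ) < m then f i else 0) = ∑ i ∈ range m, f i := by
  rw [Fin.sum_univ_eq_sum_range (fun i => if i < m then f i else 0), ← sum_filter]
  congr 1
  ext i
  simp only [mem_filter, mem_range]
  omega

theorem sum_sq_sortedDesc (d : Fin n → ℝ) : ∑ i ∈ range n, sortedDesc d i ^ 2 = ∑ i, d i ^ 2 := by
  rw [← Fin.sum_univ_eq_sum_range (fun i => sortedDesc d i ^ 2)]
  simp only [sortedDesc_coe]
  exact Equiv.sum_comp (descPerm d) (fun i => d i ^ 2)

open Classical in
theorem rho_eq (hn : 0 < n) (d : Fin n → ℝ) : rho d =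
    let k := min (sInf {k : ℕ | ∑ i : Fin n, (if k < (i : ℕ) then sortedDesc d i ^ 2 else 0) ≤
        ∑ i : Fin n, (if (i : ℕ) ≤ k then sortedDesc d i ^ 2 else 0)}) (n - 1)
    if sortedDesc d k ≠ 0 then sortedDesc d 0 / sortedDesc d k else 1 := by
  have hs (i : Fin n) : d (Tuple.sort d i.rev) = sortedDesc d i := (sortedDesc_coe d i).symm
  simp only [rho, dif_pos hn, hs]

theorem exists_rho_eq (hn : 0 < n) (d : Fin n → ℝ) :
    ∃ K < n, ∑ i, d i ^ 2 ≤ 2 * ∑ i ∈ range (K + 1), sortedDesc d i ^ 2 ∧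
      (∀ m < K, 2 * ∑ i ∈ range (m + 1), sortedDesc d i ^ 2 < ∑ i, d i ^ 2) ∧
      rho d = if sortedDesc d K ≠ 0 then sortedDesc d 0 / sortedDesc d K else 1 := by
  have head_eq (k : ℕ) (hk : k < n) : ∑ i : Fin n, (if (i : ℕ) ≤ k then sortedDesc d i ^ 2 else 0) =
      ∑ i ∈ range (k + 1), sortedDesc d i ^ 2 := by
    simp only [Nat.le_iff_lt_add_one]
    exact sum_ite_val_lt_eq_sum_range (fun i => sortedDesc d i ^ 2) (m := k + 1) hk
  set S := {k : ℕ | ∑ i : Fin n, (if k < (i : ℕ) then sortedDesc d i ^ 2 else 0) ≤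
    ∑ i : Fin n, (if (i : ℕ) ≤ k then sortedDesc d i ^ 2 else 0)}
  have mem_S (k : ℕ) (hk : k < n) :
      k ∈ S ↔ ∑ i, d i ^ 2 ≤ 2 * ∑ i ∈ range (k + 1), sortedDesc d i ^ 2 := by
    have tail_add_head : ∑ i : Fin n, (if k < (i : ℕ) then sortedDesc d i ^ 2 else 0) +
        ∑ i : Fin n, (if (i : ℕ) ≤ k then sortedDesc d i ^ 2 else 0) = ∑ i, d i ^ 2 := by
      rw [← sum_sq_sortedDesc, ← Fin.sum_univ_eq_sum_range (fun i => sortedDesc d i ^ 2),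
        ← sum_add_distrib]
      refine sum_congr rfl fun i _ => ?_
      split_ifs <;> first | omega | ring
    show (_ : ℝ) ≤ _ ↔ _
    rw [← head_eq k hk]
    constructor <;> intro h <;> linarith
  have hmem : n - 1 ∈ S := by
    show (_ : ℝ) ≤ _
    refine (sum_eq_zero fun i _ => if_neg (by have := i.isLt; omega)).trans_le
      (sum_nonneg fun i _ => ?_)
    split_ifs <;> positivity
  have hK : sInf S ≤ n - 1 := Nat.sInf_le hmem
  refine ⟨sInf S, by omega, (mem_S _ (by omega)).mp (Nat.sInf_mem ⟨_, hmem⟩), fun m hm => ?_, ?_⟩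
  · have := mt (mem_S m (by omega)).mpr (Nat.notMem_of_lt_sInf hm)
    linarith
  · rw [rho_eq hn, min_eq_left hK]

noncomputable def topIndicator (d : Fin n → ℝ) (j : ℕ) : EuclideanSpace ℝ (Fin n) :=
  WithLp.toLp 2 fun i => if ((descPerm d).symm i : ℕ) < j then 1 else 0

theorem topIndicator_eq_zero_or_one (d : Fin n → ℝ) (j : ℕ) (i : Fin n) :
    topIndicator d j i = 0 ∨ topIndicator d j i = 1 := by
  simp only [topIndicator]
  split_ifs <;> simp

theorem sum_topIndicator_mul (d f : Fin n → ℝ) (j : ℕ) :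
    ∑ i, topIndicator d j i * f i = ∑ m : Fin n, if (m : ℕ) < j then f (descPerm d m) else 0 := by
  rw [← Equiv.sum_comp (descPerm d)]
  simp [topIndicator]

theorem inner_topIndicator (z : EuclideanSpace ℝ (Fin n)) {j : ℕ} (hj : j ≤ n) :
    ⟪z, topIndicator z j⟫ = ∑ m ∈ range j, sortedDesc z m := by
  simp only [PiLp.inner_apply, RCLike.inner_apply, conj_trivial, sum_topIndicator_mul,
    ← sortedDesc_coe]
  exact sum_ite_val_lt_eq_sum_range _ hj

theorem norm_topIndicator (d : Fin n → ℝ) {j : ℕ} (hj : j ≤ n) : ‖topIndicator d j‖ = √j := by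
  have hsq (i : Fin n) : ‖topIndicator d j i‖ ^ 2 = topIndicator d j i * 1 := by
    rcases topIndicator_eq_zero_or_one d j i with h | h <;> simp [h]
  simp only [EuclideanSpace.norm_eq, hsq, sum_topIndicator_mul]
  rw [sum_ite_val_lt_eq_sum_range (fun _ => 1) hj]
  simp

end Sorting

/-- Lemma 6: for any `z ∈ ℝⁿ` with non-negative coordinates there is a non-zero
`δ ∈ {0,1}ⁿ` with `⟨z,δ⟩ ≥ (1/√(8·(log ρ(z) + 1)))·‖z‖·‖δ‖`. -/
theorem statement14 (n : ℕ) (hn : 1 ≤ n) (z : EuclideanSpace ℝ (Fin n))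
    (hz : ∀ i, 0 ≤ z i) :
    ∃ δ : EuclideanSpace ℝ (Fin n), δ ≠ 0 ∧ (∀ i, δ i = 0 ∨ δ i = 1) ∧
      ⟪z, δ⟫ ≥ (1 / Real.sqrt (8 * (Real.log (rho fun i => z i) + 1))) * (‖z‖ * ‖δ‖) := by
  obtain ⟨K, hKn, hhead, hmin, hrho⟩ := exists_rho_eq hn fun i => z i
  set t := sortedDesc fun i => z i
  have hnorm : ‖z‖ ^ 2 = ∑ i, z i ^ 2 := by simp [EuclideanSpace.norm_sq_eq]
  suffices ∃ j ≤ K, ‖z‖ / √(8 * (log (rho fun i => z i) + 1)) * √(j + 1) ≤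
      ∑ i ∈ range (j + 1), t i by
    obtain ⟨j, hjK, hj⟩ := this
    have hδ := norm_topIndicator (fun i => z i) (j := j + 1) (by omega)
    refine ⟨topIndicator z (j + 1), ?_, topIndicator_eq_zero_or_one _ _, ?_⟩
    · rw [← norm_ne_zero_iff, hδ]
      positivity
    · rw [inner_topIndicator z (by omega), hδ]
      push_cast
      exact le_of_eq_of_le (by ring) hj
  rcases (sortedDesc_nonneg hz K).eq_or_lt with hK0 | hKpos
  · have hz0 : ‖z‖ = 0 := by
      nlinarith [nonpos_of_minimal_of_eq_zero hhead hmin hK0.symm, norm_nonneg z]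
    exact ⟨0, Nat.zero_le K, by simp [hz0, t, sortedDesc_nonneg hz]⟩
  · rw [hrho, if_pos hKpos.ne']
    exact exists_sum_range_ge (antitone_sortedDesc hz) hKpos (hnorm ▸ hhead)
end

section
/- For any real λ > 0 and positive integers q and t with q ≤ t/(λ+1), one has Σ_{j=0}^{q} C(t,j)·λ^{t−j} ≤ λ^{t−q}·e^{t·H(q/t)}, where C(t,j) is the binomial coefficient. -/
/-!
Put `p = q/t`. Since `t·H(p) = -q log p - (t-q) log(1-p)`, the right-hand side is
`λ^{t-q} / (p^q (1-p)^{t-q})`. The hypothesis `q ≤ t/(λ+1)` says `λp ≤ 1-p`, so for `j ≤ q`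
each term `C(t,j) λ^{t-j}` is at most `λ^{t-q} C(t,j) p^j (1-p)^{t-j} / (p^q (1-p)^{t-q})`,
and the binomial probabilities `C(t,j) p^j (1-p)^{t-j}` sum to at most `1`.
-/

/-- The entropy function `H(x) = -x·log x - (1-x)·log(1-x)`, extended by continuity
with `H(0) = H(1) = 0` (recall `Real.log 0 = 0`). -/
noncomputable def entropy (x : ℝ) : ℝ := -x * Real.log x - (1 - x) * Real.log (1 - x)

open Finset Real

theorem exp_mul_entropy_div_mul_pow {k n : ℕ} (hkn : k ≤ n) :
    exp (n * entropy (k / n)) * ((k / n : ℝ) ^ k * (1 - k / n : ℝ) ^ (n - k)) = 1 := by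
  rcases Nat.eq_zero_or_pos k with rfl | hk
  · simp [entropy]
  rcases hkn.eq_or_lt with rfl | hkn
  · simp [entropy, (Nat.cast_pos.mpr hk).ne']
  have hn : (0 : ℝ) < n := by exact_mod_cast hk.trans hkn
  set p : ℝ := k / n with hp
  have hp0 : 0 < p := by positivity
  have hp1 : 0 < 1 - p := by
    rw [sub_pos, hp, div_lt_one hn]; exact_mod_cast hkn
  have hH : (n : ℝ) * entropy p = -(k * log p + ((n - k : ℕ) : ℝ) * log (1 - p)) := by
    rw [Nat.cast_sub hkn.le, entropy, hp]; field_simp; ring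
  rw [hH, exp_neg, exp_add, exp_nat_mul, exp_nat_mul, exp_log hp0, exp_log hp1,
    inv_mul_cancel₀ (by positivity)]

theorem pow_mul_pow_mul_pow_le {lam p : ℝ} (hlam : 0 ≤ lam) (hp : 0 ≤ p)
    (hlamp : lam * p ≤ 1 - p) {j q t : ℕ} (hjq : j ≤ q) (hqt : q ≤ t) :
    lam ^ (t - j) * (p ^ q * (1 - p) ^ (t - q)) ≤
      lam ^ (t - q) * (p ^ j * (1 - p) ^ (t - j)) := by
  obtain ⟨a, rfl⟩ := Nat.exists_eq_add_of_le hjq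
  obtain ⟨b, rfl⟩ := Nat.exists_eq_add_of_le hqt
  have h1p : 0 ≤ 1 - p := (mul_nonneg hlam hp).trans hlamp
  simp only [add_assoc, Nat.add_sub_cancel_left, Nat.add_sub_add_left]
  calc lam ^ (a + b) * (p ^ (j + a) * (1 - p) ^ b)
      = lam ^ b * (p ^ j * (1 - p) ^ b) * (lam * p) ^ a := by ring
    _ ≤ lam ^ b * (p ^ j * (1 - p) ^ b) * (1 - p) ^ a := by gcongr
    _ = lam ^ b * (p ^ j * (1 - p) ^ (a + b)) := by ring

theorem sum_range_choose_mul_pow_mul_pow_le_one {p : ℝ} (hp0 : 0 ≤ p) (hp1 : p ≤ 1)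
    {q t : ℕ} (hqt : q ≤ t) :
    ∑ j ∈ range (q + 1), p ^ j * (1 - p) ^ (t - j) * t.choose j ≤ 1 := by
  calc ∑ j ∈ range (q + 1), p ^ j * (1 - p) ^ (t - j) * t.choose j
      ≤ ∑ j ∈ range (t + 1), p ^ j * (1 - p) ^ (t - j) * t.choose j := by
        apply sum_le_sum_of_subset_of_nonneg (range_subset_range.mpr (by omega))
        intro j _ _
        have : 0 ≤ 1 - p := by linarith
        positivity
    _ = 1 := by rw [← add_pow, add_sub_cancel, one_pow]

theorem sum_range_choose_mul_pow_mul_le {lam p : ℝ} (hlam : 0 ≤ lam) (hp : 0 ≤ p)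
    (hlamp : lam * p ≤ 1 - p) {q t : ℕ} (hqt : q ≤ t) :
    (∑ j ∈ range (q + 1), (t.choose j : ℝ) * lam ^ (t - j)) * (p ^ q * (1 - p) ^ (t - q)) ≤
      lam ^ (t - q) := by
  have hp1 : p ≤ 1 := by nlinarith
  calc (∑ j ∈ range (q + 1), (t.choose j : ℝ) * lam ^ (t - j)) * (p ^ q * (1 - p) ^ (t - q))
      = ∑ j ∈ range (q + 1),
          (t.choose j : ℝ) * (lam ^ (t - j) * (p ^ q * (1 - p) ^ (t - q))) := by
        simp only [sum_mul, mul_assoc]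
    _ ≤ ∑ j ∈ range (q + 1),
          (t.choose j : ℝ) * (lam ^ (t - q) * (p ^ j * (1 - p) ^ (t - j))) := by
        refine sum_le_sum fun j hj => mul_le_mul_of_nonneg_left ?_ (Nat.cast_nonneg _)
        exact pow_mul_pow_mul_pow_le hlam hp hlamp (Nat.lt_succ_iff.mp (mem_range.mp hj)) hqt
    _ = lam ^ (t - q) * ∑ j ∈ range (q + 1), p ^ j * (1 - p) ^ (t - j) * t.choose j := by
        rw [mul_sum]; congr! 1 with j; ring
    _ ≤ lam ^ (t - q) * 1 := by
        gcongr
        exact sum_range_choose_mul_pow_mul_pow_le_one hp hp1 hqt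
    _ = lam ^ (t - q) := mul_one _

theorem statement15_general (lam : ℝ) (hlam : 0 < lam) (q t : ℕ)
    (hqt : (q : ℝ) ≤ (t : ℝ) / (lam + 1)) :
    ∑ j ∈ Finset.range (q + 1), (t.choose j : ℝ) * lam ^ (t - j) ≤
      lam ^ (t - q) * Real.exp ((t : ℝ) * entropy ((q : ℝ) / (t : ℝ))) := by
  have hlam1 : 0 < lam + 1 := by linarith
  have hq_mul : (q : ℝ) * (lam + 1) ≤ t := (le_div_iff₀ hlam1).mp hqt
  have hq_le_t : q ≤ t := by
    have : (q : ℝ) ≤ q * (lam + 1) := le_mul_of_one_le_right q.cast_nonneg (by linarith)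
    exact_mod_cast this.trans hq_mul
  have hlamp : lam * (q / t) ≤ 1 - q / t := by
    -- dividing by `t` through `t / t ≤ 1` also covers `t = 0`
    have : (q / t : ℝ) ≤ t / t / (lam + 1) := by
      rw [div_right_comm]; exact div_le_div_of_nonneg_right hqt t.cast_nonneg
    have := this.trans (div_le_div_of_nonneg_right (div_self_le_one (t : ℝ)) hlam1.le)
    rw [le_div_iff₀ hlam1] at this
    linarith
  have hsum := sum_range_choose_mul_pow_mul_le hlam.le (by positivity) hlamp hq_le_t
  have hexp := exp_mul_entropy_div_mul_pow hq_le_t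
  calc ∑ j ∈ range (q + 1), (t.choose j : ℝ) * lam ^ (t - j)
      = (∑ j ∈ range (q + 1), (t.choose j : ℝ) * lam ^ (t - j)) *
          ((q / t : ℝ) ^ q * (1 - q / t : ℝ) ^ (t - q)) * exp (t * entropy (q / t)) := by
        rw [mul_assoc, mul_comm (_ * _), hexp, mul_one]
    _ ≤ lam ^ (t - q) * exp (t * entropy (q / t)) := by gcongr

/-- Lemma 7 (large deviations): for real `λ > 0` and positive integers `q ≤ t/(λ+1)`,
`Σ_{j=0}^{q} C(t,j)·λ^{t-j} ≤ λ^{t-q}·e^{t·H(q/t)}`. -/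
theorem statement15 (lam : ℝ) (hlam : 0 < lam) (q t : ℕ) (hq : 0 < q) (ht : 0 < t)
    (hqt : (q : ℝ) ≤ (t : ℝ) / (lam + 1)) :
    ∑ j ∈ Finset.range (q + 1), (t.choose j : ℝ) * lam ^ (t - j) ≤
      lam ^ (t - q) * Real.exp ((t : ℝ) * entropy ((q : ℝ) / (t : ℝ))) :=
  statement15_general lam hlam q t hqt
end

section
/- Let λ ≥ 4 be real and s, t ≥ 1 integers, and set n = (2s)^t. Suppose z ∈ ℝⁿ is a vector which, for each j ∈ [0,t], has exactly C(t,j)·s^t coordinates equal to λ^j. Then for every δ ∈ {0,1}ⁿ one has ⟨z, δ⟩ ≤ (4λ/t^{1/4})·‖z‖·‖δ‖. -/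
/-!
Write `x_j` for the number of ones of `δ` on the level set `{z = λ^j}`, so that `x_j ≤ C(t,j) s^t`,
`⟪z, δ⟫ = ∑ λ^j x_j`, `‖δ‖² = ∑ x_j` and `‖z‖² = s^t (1 + λ²)^t`. For a threshold `c > 0`, the
levels with `λ^j ≤ c` contribute at most `c ‖δ‖²` and the others at most
`s^t ∑_{λ^j > c} C(t,j) λ^j`; optimising over `c` reduces everything to the binomial tail estimate
`√t λ^K ∑_{j ≥ K} C(t,j) λ^j ≤ 4 λ² (1 + λ²)^t`.

For `K ≤ λt/(λ + 9/10)` the tail is at most `(1 + λ)^t`, and `λ^K (1 + λ)^t` is exponentially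
smaller than `(1 + λ²)^t`. Beyond that point the terms decay geometrically, so the tail is
comparable to its first term `C(t,K) λ^K`; this is controlled by Stirling's formula when
`t - K ≥ 2t/λ⁴`, and by testing the binomial expansion of `(1 + y)^t` at `y = 1/(2λ²)` near the top.
-/

open Real Finset
open scoped Nat RealInnerProductSpace

theorem factorial_le_stirling {n : ℕ} (hn : n ≠ 0) :
    (n ! : ℝ) ≤ exp 1 * √n * (n / exp 1) ^ n := by
  obtain ⟨m, rfl⟩ := Nat.exists_eq_succ_of_ne_zero hn
  have h : Stirling.stirlingSeq (m + 1) ≤ exp 1 / √2 := by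
    simpa [Stirling.stirlingSeq_one] using Stirling.stirlingSeq'_antitone (Nat.zero_le m)
  rw [Stirling.stirlingSeq, div_le_iff₀ (by positivity)] at h
  calc ((m + 1) ! : ℝ) ≤ exp 1 / √2 * (√(2 * (m + 1 : ℕ)) * ((m + 1 : ℕ) / exp 1) ^ (m + 1)) := h
    _ = exp 1 * √(m + 1 : ℕ) * ((m + 1 : ℕ) / exp 1) ^ (m + 1) := by
      rw [sqrt_mul zero_le_two]; field_simp

-- `p^K (1 - p)^L ≤ (K / (K + L))^K (L / (K + L))^L` for `p = x / (1 + x)`, by weighted AM-GM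
theorem pow_mul_pow_le_one_add_pow_mul {K L : ℕ} (hK : K ≠ 0) (hL : L ≠ 0) {x : ℝ} (hx : 0 ≤ x) :
    ((K : ℝ) + L) ^ (K + L) * x ^ K ≤ (1 + x) ^ (K + L) * ((K : ℝ) ^ K * (L : ℝ) ^ L) := by
  have hKpos : (0 : ℝ) < K := by positivity
  have hLpos : (0 : ℝ) < L := by positivity
  set T : ℝ := (K : ℝ) + L
  have hT : 0 < T := by positivity
  have amgm := geom_mean_le_arith_mean2_weighted (p₁ := x * T / K) (p₂ := T / L)
    (div_nonneg hKpos.le hT.le) (div_nonneg hLpos.le hT.le) (by positivity) (by positivity)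
    (by field_simp; rfl)
  have hmean : (K : ℝ) / T * (x * T / K) + L / T * (T / L) = 1 + x := by field_simp; ring
  rw [hmean] at amgm
  have hpow := pow_le_pow_left₀ (by positivity) amgm (K + L)
  have hexp : ((K + L : ℕ) : ℝ) = T := by push_cast; rfl
  rw [mul_pow, ← rpow_natCast, ← rpow_natCast (_ ^ _), ← rpow_mul (by positivity),
    ← rpow_mul (by positivity), hexp, div_mul_cancel₀ _ hT.ne', div_mul_cancel₀ _ hT.ne',
    rpow_natCast, rpow_natCast, div_pow, div_pow, mul_pow] at hpow
  calc T ^ (K + L) * x ^ K = x ^ K * T ^ K / K ^ K * (T ^ L / L ^ L) * (K ^ K * L ^ L) := by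
        field_simp; ring
    _ ≤ _ := by gcongr

theorem two_pi_mul_sqrt_mul_choose_mul_pow_le {K L : ℕ} (hK : K ≠ 0) (hL : L ≠ 0) :
    2 * π * √((K : ℝ) * L) * (K + L).choose K * ((K : ℝ) ^ K * (L : ℝ) ^ L) ≤
      exp 1 * √((K : ℝ) + L) * ((K : ℝ) + L) ^ (K + L) := by
  have hfac : ((K + L).choose K : ℝ) * K ! * L ! = (K + L)! := by
    have h := Nat.choose_mul_factorial_mul_factorial (Nat.le_add_right K L)
    rw [Nat.add_sub_cancel_left] at h
    exact_mod_cast h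
  have hup := factorial_le_stirling (n := K + L) (by omega)
  push_cast at hup
  have hprod : ((K + L).choose K : ℝ) * (√(2 * π * K) * (K / exp 1) ^ K) *
      (√(2 * π * L) * (L / exp 1) ^ L) ≤
        exp 1 * √((K : ℝ) + L) * (((K : ℝ) + L) / exp 1) ^ (K + L) := by
    calc _ ≤ ((K + L).choose K : ℝ) * K ! * L ! := by
          gcongr <;> exact Stirling.le_factorial_stirling _
      _ ≤ _ := hfac ▸ hup
  have hsqrt : √(2 * π * K) * √(2 * π * L) = 2 * π * √((K : ℝ) * L) := by
    rw [← sqrt_mul (by positivity), show 2 * π * K * (2 * π * L) = (2 * π) ^ 2 * (K * L) by ring,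
      sqrt_mul (by positivity), sqrt_sq (by positivity)]
  rw [div_pow, div_pow, div_pow] at hprod
  calc _ = ((K + L).choose K : ℝ) * (√(2 * π * K) * √(2 * π * L)) * (K ^ K * L ^ L) := by
        rw [hsqrt]; ring
    _ = ((K + L).choose K : ℝ) * (√(2 * π * K) * (K ^ K / exp 1 ^ K)) *
        (√(2 * π * L) * (L ^ L / exp 1 ^ L)) * exp 1 ^ (K + L) := by
      rw [pow_add]; field_simp
    _ ≤ exp 1 * √((K : ℝ) + L) * (((K : ℝ) + L) ^ (K + L) / exp 1 ^ (K + L)) * exp 1 ^ (K + L) := by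
      gcongr
    _ = _ := by field_simp

theorem two_mul_sqrt_mul_choose_mul_pow_le {K L : ℕ} (hK : K ≠ 0) (hL : L ≠ 0) {x : ℝ}
    (hx : 0 ≤ x) :
    2 * √((K : ℝ) * L) * (K + L).choose K * x ^ K ≤ √((K : ℝ) + L) * (1 + x) ^ (K + L) := by
  have hstir := two_pi_mul_sqrt_mul_choose_mul_pow_le hK hL
  have hent := pow_mul_pow_le_one_add_pow_mul hK hL hx
  have hKL : (0 : ℝ) < (K : ℝ) ^ K * (L : ℝ) ^ L := by positivity
  have he : exp 1 ≤ π := by linarith [exp_one_lt_d9, pi_gt_three]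
  suffices h : π * (2 * √((K : ℝ) * L) * (K + L).choose K * x ^ K) * ((K : ℝ) ^ K * (L : ℝ) ^ L) ≤
      π * (√((K : ℝ) + L) * (1 + x) ^ (K + L)) * ((K : ℝ) ^ K * (L : ℝ) ^ L) from
    le_of_mul_le_mul_left (le_of_mul_le_mul_right h hKL) pi_pos
  calc _ = 2 * π * √((K : ℝ) * L) * (K + L).choose K * ((K : ℝ) ^ K * (L : ℝ) ^ L) * x ^ K := by
        ring
    _ ≤ exp 1 * √((K : ℝ) + L) * ((K : ℝ) + L) ^ (K + L) * x ^ K := by gcongr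
    _ ≤ exp 1 * √((K : ℝ) + L) * ((1 + x) ^ (K + L) * ((K : ℝ) ^ K * (L : ℝ) ^ L)) := by
      rw [mul_assoc _ (_ ^ _)]; gcongr
    _ = exp 1 * (√((K : ℝ) + L) * (1 + x) ^ (K + L)) * ((K : ℝ) ^ K * (L : ℝ) ^ L) := by ring
    _ ≤ _ := by gcongr

theorem sum_range_choose_mul_pow (x : ℝ) (t : ℕ) :
    ∑ j ∈ range (t + 1), (t.choose j : ℝ) * x ^ j = (1 + x) ^ t := by
  rw [add_comm 1 x, add_pow]
  exact sum_congr rfl fun j _ => by ring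

theorem ten_mul_sqrt_le_mul_exp {a t : ℝ} (ha : 4 ≤ a) (ht : 0 ≤ t) :
    10 * √t ≤ 4 * a ^ 2 * exp (t / (4 * (1 + a ^ 2))) := by
  have ha2 : 16 ≤ a ^ 2 := by nlinarith
  set u := t / (4 * (1 + a ^ 2))
  by_cases hsmall : √t ≤ 2 / 5 * a ^ 2
  · nlinarith [one_le_exp (show 0 ≤ u by positivity)]
  push Not at hsmall
  -- for large `t`, already `exp u ≥ e * u` beats `√t`
  have hsq : √t * √t = t := mul_self_sqrt ht
  have hu : 8 / 85 * √t ≤ u := by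
    rw [le_div_iff₀ (by positivity)]
    nlinarith [sqrt_nonneg t]
  have heu : exp 1 * u ≤ exp u := by
    have := add_one_le_exp (u - 1)
    rw [show u = 1 + (u - 1) by ring, exp_add]
    nlinarith [exp_pos 1]
  have hquarter : √t / 4 ≤ exp u := by
    have hu0 : 0 ≤ u := by positivity
    nlinarith [exp_one_gt_d9, sqrt_nonneg t, mul_le_mul_of_nonneg_right exp_one_gt_d9.le hu0]
  calc 10 * √t ≤ 4 * 16 * (√t / 4) := by nlinarith [sqrt_nonneg t]
    _ ≤ 4 * a ^ 2 * exp u := by gcongr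

theorem choose_mul_pow_le_one_add_pow (t R : ℕ) {y : ℝ} (hy : 0 ≤ y) :
    (t.choose R : ℝ) * y ^ R ≤ (1 + y) ^ t := by
  rcases lt_or_ge t R with h | h
  · simp only [Nat.choose_eq_zero_of_lt h, CharP.cast_eq_zero, zero_mul]
    positivity
  rw [add_comm, add_pow]
  calc (t.choose R : ℝ) * y ^ R = y ^ R * 1 ^ (t - R) * t.choose R := by ring
    _ ≤ _ := single_le_sum (f := fun j => y ^ j * 1 ^ (t - j) * (t.choose j : ℝ))
      (fun j _ => by positivity) (mem_range.2 (by omega))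

theorem choose_le_sq_pow_mul_exp {a : ℝ} (ha : 4 ≤ a) {t R : ℕ} (hR : a ^ 4 * R ≤ 2 * t) :
    (t.choose R : ℝ) ≤ (a ^ 2) ^ R * exp (3 * t / (4 * (1 + a ^ 2))) := by
  have ha2 : 16 ≤ a ^ 2 := by nlinarith
  have hy : (0 : ℝ) ≤ 1 / (2 * a ^ 2) := by positivity
  -- test the binomial expansion of `(1 + y)^t` at `y = 1 / (2 a²)`
  have hbin := choose_mul_pow_le_one_add_pow t R hy
  have hexp : (1 + 1 / (2 * a ^ 2)) ^ t ≤ exp (t / (2 * a ^ 2)) := by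
    rw [div_eq_mul_one_div (t : ℝ), exp_nat_mul]
    gcongr
    linarith [add_one_le_exp (1 / (2 * a ^ 2))]
  have htwo : (2 : ℝ) ^ R ≤ exp R := by
    rw [← exp_one_pow]; gcongr; linarith [exp_one_gt_d9]
  have hexpo : (R : ℝ) + t / (2 * a ^ 2) ≤ 3 * t / (4 * (1 + a ^ 2)) := by
    rw [← sub_nonneg]
    have e : 3 * (t : ℝ) / (4 * (1 + a ^ 2)) - (R + t / (2 * a ^ 2)) =
        (t * (a ^ 2 - 2) - 4 * a ^ 2 * (1 + a ^ 2) * R) / (4 * a ^ 2 * (1 + a ^ 2)) := by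
      field_simp; ring
    rw [e]
    apply div_nonneg _ (by positivity)
    have hR0 : (0 : ℝ) ≤ a ^ 2 * R := by positivity
    nlinarith [mul_le_mul_of_nonneg_right ha2 hR0]
  calc (t.choose R : ℝ) = (t.choose R : ℝ) * (1 / (2 * a ^ 2)) ^ R * ((a ^ 2) ^ R * 2 ^ R) := by
        rw [div_pow, mul_pow, one_pow]; field_simp
    _ ≤ exp (t / (2 * a ^ 2)) * ((a ^ 2) ^ R * exp R) := by gcongr; exact hbin.trans hexp
    _ = (a ^ 2) ^ R * exp (R + t / (2 * a ^ 2)) := by rw [exp_add]; ring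
    _ ≤ _ := by gcongr

theorem pow_mul_exp_div_le_one_add_pow {x : ℝ} (hx : 0 < x) (t : ℕ) :
    x ^ t * exp (t / (1 + x)) ≤ (1 + x) ^ t := by
  have hlog : 1 / (1 + x) ≤ log ((1 + x) / x) := by
    have h := one_sub_inv_le_log_of_pos (x := (1 + x) / x) (by positivity)
    rwa [inv_div, one_sub_div (by positivity), add_sub_cancel_right] at h
  rw [div_eq_mul_one_div (t : ℝ), exp_nat_mul, ← mul_pow]
  gcongr
  calc x * exp (1 / (1 + x)) ≤ x * exp (log ((1 + x) / x)) := by gcongr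
    _ = 1 + x := by rw [exp_log (by positivity)]; field_simp

theorem pow_mul_one_add_pow_mul_exp_le {a : ℝ} (ha : 4 ≤ a) {t K : ℕ}
    (hK : K * (a + 9 / 10) ≤ a * t) :
    a ^ K * (1 + a) ^ t * exp (t / (4 * (1 + a ^ 2))) ≤ (1 + a ^ 2) ^ t := by
  have ha0 : 0 < a := by linarith
  have hlog4 : 1.38 < log a := by
    have : log 4 = 2 * log 2 := by
      rw [show (4 : ℝ) = 2 ^ 2 by norm_num, log_pow]; norm_num
    linarith [log_le_log (by norm_num) ha, log_two_gt_d9]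
  -- `log ((1 + a²) / (a (1 + a))) ≥ 1 - a (1 + a) / (1 + a²)`
  have hratio : log a + log (1 + a) - (a - 1) / (1 + a ^ 2) ≤ log (1 + a ^ 2) := by
    have h := one_sub_inv_le_log_of_pos (x := (1 + a ^ 2) / (a * (1 + a))) (by positivity)
    rw [log_div (by positivity) (by positivity), log_mul ha0.ne' (by positivity), inv_div,
      one_sub_div (by positivity)] at h
    have : (1 + a ^ 2 - a * (1 + a)) / (1 + a ^ 2) = -((a - 1) / (1 + a ^ 2)) := by ring
    linarith
  have hKt : 9 / 10 * t * log a ≤ ((t : ℝ) - K) * log a * (a + 9 / 10) := by nlinarith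
  have hexpo : K * log a + t * log (1 + a) + t / (4 * (1 + a ^ 2)) ≤ t * log (1 + a ^ 2) := by
    have hgap : t * (a - 3 / 4) / (1 + a ^ 2) ≤ ((t : ℝ) - K) * log a := by
      rw [div_le_iff₀ (by positivity)]
      nlinarith [mul_le_mul_of_nonneg_left hlog4.le (Nat.cast_nonneg t : (0 : ℝ) ≤ t)]
    have hratio_t := mul_le_mul_of_nonneg_left hratio (Nat.cast_nonneg t : (0 : ℝ) ≤ t)
    have hsplit : (t : ℝ) * (a - 3 / 4) / (1 + a ^ 2) =
        t * ((a - 1) / (1 + a ^ 2)) + t / (4 * (1 + a ^ 2)) := by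
      field_simp; ring
    nlinarith
  calc a ^ K * (1 + a) ^ t * exp (t / (4 * (1 + a ^ 2)))
      = exp (K * log a + t * log (1 + a) + t / (4 * (1 + a ^ 2))) := by
        rw [exp_add, exp_add, exp_nat_mul, exp_nat_mul, exp_log ha0, exp_log (by positivity)]
    _ ≤ exp (t * log (1 + a ^ 2)) := exp_le_exp.2 hexpo
    _ = (1 + a ^ 2) ^ t := by rw [exp_nat_mul, exp_log (by positivity)]

theorem one_sub_mul_sum_Ico_le {u : ℕ → ℝ} {r : ℝ} {K n : ℕ} (hr : 0 ≤ r) (hu : ∀ j, 0 ≤ u j)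
    (hdecay : ∀ j, K ≤ j → j + 1 < n → u (j + 1) ≤ r * u j) :
    (1 - r) * ∑ j ∈ Ico K n, u j ≤ u K := by
  induction hd : n - K generalizing K with
  | zero => simp [Ico_eq_empty_of_le (by omega : n ≤ K), hu K]
  | succ d ih =>
    rw [sum_eq_sum_Ico_succ_bot (by omega), mul_add]
    have htail := ih (K := K + 1) (fun j hj => hdecay j (by omega)) (by omega)
    by_cases hK : K + 1 < n
    · nlinarith [hdecay K le_rfl hK, hu K]
    · simp only [Ico_eq_empty_of_le (by omega : n ≤ K + 1), sum_empty, mul_zero, add_zero]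
      nlinarith [hu K]

theorem choose_succ_mul_pow_le {a r : ℝ} (ha : 0 ≤ a) {t j : ℕ}
    (h : a * ((t - j : ℕ) : ℝ) ≤ r * (j + 1)) :
    (t.choose (j + 1) : ℝ) * a ^ (j + 1) ≤ r * ((t.choose j : ℝ) * a ^ j) := by
  have hrec : (t.choose (j + 1) : ℝ) * (j + 1) = t.choose j * ((t - j : ℕ) : ℝ) := by
    exact_mod_cast Nat.choose_succ_right_eq t j
  have hj : (0 : ℝ) < j + 1 := by positivity
  rw [← mul_le_mul_iff_of_pos_right hj]
  calc (t.choose (j + 1) : ℝ) * a ^ (j + 1) * (j + 1)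
        = t.choose j * a ^ j * (a * ((t - j : ℕ) : ℝ)) := by
        rw [mul_right_comm, hrec, pow_succ]; ring
    _ ≤ t.choose j * a ^ j * (r * (j + 1)) := by gcongr
    _ = _ := by ring

theorem ten_mul_sqrt_mul_choose_mul_sq_pow_le_of_bulk {a : ℝ} (ha : 4 ≤ a) {t K : ℕ}
    (hK : a * t < K * (a + 9 / 10)) (hbulk : 2 * t ≤ a ^ 4 * ((t - K : ℕ) : ℝ)) :
    10 * √t * t.choose K * (a ^ 2) ^ K ≤ 4 * a ^ 2 * (1 + a ^ 2) ^ t := by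
  rcases lt_or_ge t K with hKt | hKt
  · simp only [Nat.choose_eq_zero_of_lt hKt, CharP.cast_eq_zero, mul_zero, zero_mul]
    positivity
  obtain ⟨L, rfl⟩ : ∃ L, t = K + L := ⟨t - K, by omega⟩
  rw [Nat.add_sub_cancel_left] at hbulk
  push_cast at hK hbulk ⊢
  have hK0 : K ≠ 0 := by
    rintro rfl
    simp only [CharP.cast_eq_zero, zero_add, zero_mul] at hK
    nlinarith
  have hL0 : L ≠ 0 := by
    rintro rfl
    simp only [CharP.cast_eq_zero, mul_zero] at hbulk
    exact hK0 (by exact_mod_cast (by linarith : (K : ℝ) = 0))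
  have hloc := two_mul_sqrt_mul_choose_mul_pow_le hK0 hL0 (sq_nonneg a)
  -- `K > 0.8 t` and `L ≥ 2t / a⁴`
  have hKL : 10 * ((K : ℝ) + L) ≤ 8 * a ^ 2 * √((K : ℝ) * L) := by
    have h49 : 4 * ((K : ℝ) + L) < 49 / 10 * K := by nlinarith
    have hsq : (10 * ((K : ℝ) + L)) ^ 2 ≤ (8 * a ^ 2) ^ 2 * (K * L) := by
      nlinarith [mul_le_mul (le_of_lt h49) hbulk (by positivity) (by positivity)]
    calc 10 * ((K : ℝ) + L) = √((10 * ((K : ℝ) + L)) ^ 2) := by rw [sqrt_sq (by positivity)]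
      _ ≤ √((8 * a ^ 2) ^ 2 * (K * L)) := by gcongr
      _ = 8 * a ^ 2 * √((K : ℝ) * L) := by rw [sqrt_mul (by positivity), sqrt_sq (by positivity)]
  have hpos : 0 < 2 * √((K : ℝ) * L) := by positivity
  rw [← mul_le_mul_iff_of_pos_right hpos]
  calc 10 * √((K : ℝ) + L) * (K + L).choose K * (a ^ 2) ^ K * (2 * √((K : ℝ) * L))
      = 10 * √((K : ℝ) + L) * (2 * √((K : ℝ) * L) * (K + L).choose K * (a ^ 2) ^ K) := by ring
    _ ≤ 10 * √((K : ℝ) + L) * (√((K : ℝ) + L) * (1 + a ^ 2) ^ (K + L)) := by gcongr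
    _ = 10 * ((K : ℝ) + L) * (1 + a ^ 2) ^ (K + L) := by
      rw [← mul_assoc, mul_assoc 10, mul_self_sqrt (by positivity)]
    _ ≤ 8 * a ^ 2 * √((K : ℝ) * L) * (1 + a ^ 2) ^ (K + L) := by gcongr
    _ = _ := by ring

theorem ten_mul_sqrt_mul_choose_mul_sq_pow_le_of_top {a : ℝ} (ha : 4 ≤ a) {t K : ℕ}
    (hKt : K ≤ t) (htop : a ^ 4 * ((t - K : ℕ) : ℝ) ≤ 2 * t) :
    10 * √t * t.choose K * (a ^ 2) ^ K ≤ 4 * a ^ 2 * (1 + a ^ 2) ^ t := by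
  have hC := choose_le_sq_pow_mul_exp ha htop
  rw [Nat.choose_symm hKt] at hC
  have h10 := ten_mul_sqrt_le_mul_exp ha (Nat.cast_nonneg t)
  have hsplit :
      exp (t / (4 * (1 + a ^ 2))) * exp (3 * t / (4 * (1 + a ^ 2))) = exp (t / (1 + a ^ 2)) := by
    rw [← exp_add]; congr 1; field_simp; ring
  calc 10 * √t * t.choose K * (a ^ 2) ^ K
      ≤ 4 * a ^ 2 * exp (t / (4 * (1 + a ^ 2))) *
          ((a ^ 2) ^ (t - K) * exp (3 * t / (4 * (1 + a ^ 2)))) * (a ^ 2) ^ K := by gcongr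
    _ = 4 * a ^ 2 * ((a ^ 2) ^ t * exp (t / (1 + a ^ 2))) := by
      rw [← hsplit, ← Nat.sub_add_cancel hKt, pow_add, Nat.sub_add_cancel hKt]; ring
    _ ≤ 4 * a ^ 2 * (1 + a ^ 2) ^ t := by
      gcongr; exact pow_mul_exp_div_le_one_add_pow (by positivity) t

theorem sqrt_mul_pow_mul_sum_choose_le {a : ℝ} (ha : 4 ≤ a) (t K : ℕ) :
    √t * (a ^ K * ∑ j ∈ Ico K (t + 1), (t.choose j : ℝ) * a ^ j) ≤ 4 * a ^ 2 * (1 + a ^ 2) ^ t := by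
  have ha0 : 0 ≤ a := by linarith
  rcases lt_or_ge t K with hKt | hKt
  · rw [Ico_eq_empty_of_le (by omega), sum_empty, mul_zero, mul_zero]
    positivity
  by_cases hlow : K * (a + 9 / 10) ≤ a * t
  · have hT : ∑ j ∈ Ico K (t + 1), (t.choose j : ℝ) * a ^ j ≤ (1 + a) ^ t := by
      rw [← sum_range_choose_mul_pow, range_eq_Ico]
      exact sum_le_sum_of_subset_of_nonneg (Ico_subset_Ico_left (Nat.zero_le K))
        fun j _ _ => by positivity
    calc √t * (a ^ K * ∑ j ∈ Ico K (t + 1), (t.choose j : ℝ) * a ^ j)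
        ≤ 10 * √t * (a ^ K * (1 + a) ^ t) := by gcongr; linarith [sqrt_nonneg (t : ℝ)]
      _ ≤ 4 * a ^ 2 * exp (t / (4 * (1 + a ^ 2))) * (a ^ K * (1 + a) ^ t) := by
        gcongr ?_ * _; exact ten_mul_sqrt_le_mul_exp ha (Nat.cast_nonneg t)
      _ = 4 * a ^ 2 * (a ^ K * (1 + a) ^ t * exp (t / (4 * (1 + a ^ 2)))) := by ring
      _ ≤ 4 * a ^ 2 * (1 + a ^ 2) ^ t := by gcongr; exact pow_mul_one_add_pow_mul_exp_le ha hlow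
  push Not at hlow
  -- above `K` the terms `C(t, j) a^j` decay geometrically with ratio `9/10`
  have hT : (1 - 9 / 10) * ∑ j ∈ Ico K (t + 1), (t.choose j : ℝ) * a ^ j ≤ t.choose K * a ^ K := by
    refine one_sub_mul_sum_Ico_le (by norm_num) (fun j => by positivity) fun j hKj hj => ?_
    refine choose_succ_mul_pow_le ha0 ?_
    have hKj' : (K : ℝ) ≤ j := by exact_mod_cast hKj
    rw [Nat.cast_sub (by omega)]
    nlinarith
  have hterm : 10 * √t * t.choose K * (a ^ 2) ^ K ≤ 4 * a ^ 2 * (1 + a ^ 2) ^ t := by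
    by_cases hbulk : 2 * t ≤ a ^ 4 * ((t - K : ℕ) : ℝ)
    · exact ten_mul_sqrt_mul_choose_mul_sq_pow_le_of_bulk ha hlow hbulk
    · exact ten_mul_sqrt_mul_choose_mul_sq_pow_le_of_top ha hKt (by linarith)
  calc √t * (a ^ K * ∑ j ∈ Ico K (t + 1), (t.choose j : ℝ) * a ^ j)
      ≤ √t * (a ^ K * (10 * (t.choose K * a ^ K))) := by gcongr; linarith
    _ = 10 * √t * t.choose K * (a ^ 2) ^ K := by ring
    _ ≤ _ := hterm

theorem sqrt_mul_mul_sum_filter_choose_le {a : ℝ} (ha : 4 ≤ a) (t : ℕ) (c : ℝ) :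
    √t * (c * ∑ j ∈ range (t + 1) with c < a ^ j, (t.choose j : ℝ) * a ^ j) ≤
      4 * a ^ 2 * (1 + a ^ 2) ^ t := by
  have ha1 : 1 < a := by linarith
  have hex : ∃ k, c < a ^ k := pow_unbounded_of_one_lt c ha1
  have hfilter : {j ∈ range (t + 1) | c < a ^ j} = Ico (Nat.find hex) (t + 1) := by
    ext j
    simp only [mem_filter, mem_range, mem_Ico]
    refine ⟨fun h => ⟨Nat.find_min' hex h.2, h.1⟩, fun h => ⟨h.2, ?_⟩⟩
    exact (Nat.find_spec hex).trans_le (pow_le_pow_right₀ ha1.le h.1)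
  rw [hfilter]
  refine le_trans ?_ (sqrt_mul_pow_mul_sum_choose_le ha t (Nat.find hex))
  refine mul_le_mul_of_nonneg_left (mul_le_mul_of_nonneg_right (Nat.find_spec hex).le ?_)
    (sqrt_nonneg _)
  exact sum_nonneg fun j _ => by positivity

theorem sum_pow_mul_le_mul_add_mul {a σ c : ℝ} (ha : 0 ≤ a) (hc : 0 ≤ c) {t : ℕ} {x : ℕ → ℝ}
    (hx0 : ∀ j, 0 ≤ x j) (hx : ∀ j ≤ t, x j ≤ t.choose j * σ) :
    ∑ j ∈ range (t + 1), a ^ j * x j ≤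
      c * ∑ j ∈ range (t + 1), x j +
        σ * ∑ j ∈ range (t + 1) with c < a ^ j, (t.choose j : ℝ) * a ^ j := by
  rw [← sum_filter_not_add_sum_filter _ (fun j => c < a ^ j)]
  have hlow : ∑ j ∈ range (t + 1) with ¬c < a ^ j, a ^ j * x j ≤ c * ∑ j ∈ range (t + 1), x j := by
    rw [mul_sum]
    calc _ ≤ ∑ j ∈ range (t + 1) with ¬c < a ^ j, c * x j :=
          sum_le_sum fun j hj => mul_le_mul_of_nonneg_right (not_lt.1 (mem_filter.1 hj).2) (hx0 j)
      _ ≤ _ := sum_le_sum_of_subset_of_nonneg (filter_subset _ _) fun j _ _ =>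
          mul_nonneg hc (hx0 j)
  have hhigh : ∑ j ∈ range (t + 1) with c < a ^ j, a ^ j * x j ≤
      σ * ∑ j ∈ range (t + 1) with c < a ^ j, (t.choose j : ℝ) * a ^ j := by
    rw [mul_sum]
    refine sum_le_sum fun j hj => ?_
    have hjt : j ≤ t := by simp only [mem_filter, mem_range] at hj; omega
    calc a ^ j * x j ≤ a ^ j * (t.choose j * σ) := by gcongr; exact hx j hjt
      _ = σ * (t.choose j * a ^ j) := by ring
  exact add_le_add hlow hhigh

theorem le_two_mul_sqrt_mul_of_forall_le {S B m : ℝ} (hB : 0 < B) (hm : 0 < m)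
    (h : ∀ c > 0, S ≤ c * m + B / c) : S ≤ 2 * √(B * m) := by
  have hsB := sq_sqrt hB.le
  have hsm := sq_sqrt hm.le
  have hc : 0 < √B / √m := by positivity
  calc S ≤ √B / √m * m + B / (√B / √m) := h _ hc
    _ = 2 * (√B * √m) := by
      field_simp
      nlinarith
    _ = 2 * √(B * m) := by rw [sqrt_mul hB.le]

theorem sum_pow_mul_le_of_le_choose_mul {a σ : ℝ} (ha : 4 ≤ a) (hσ : 0 < σ) {t : ℕ} (ht : 1 ≤ t)
    {x : ℕ → ℝ} (hx0 : ∀ j, 0 ≤ x j) (hx : ∀ j ≤ t, x j ≤ t.choose j * σ) :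
    ∑ j ∈ range (t + 1), a ^ j * x j ≤
      4 * a / (t : ℝ) ^ ((1 : ℝ) / 4) * (√(σ * (1 + a ^ 2) ^ t) * √(∑ j ∈ range (t + 1), x j)) := by
  have ht0 : (0 : ℝ) < t := by exact_mod_cast ht
  set m := ∑ j ∈ range (t + 1), x j
  rcases (sum_nonneg fun j _ => hx0 j : 0 ≤ m).eq_or_lt with hm | hm
  · have hzero := (sum_eq_zero_iff_of_nonneg fun j _ => hx0 j).1 hm.symm
    rw [sum_eq_zero fun j hj => by rw [hzero j hj, mul_zero]]
    positivity
  set B := σ * (4 * a ^ 2 * (1 + a ^ 2) ^ t) / √t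
  -- split the levels at an arbitrary threshold `c`, then optimise over `c`
  have hsplit : ∀ c > 0, ∑ j ∈ range (t + 1), a ^ j * x j ≤ c * m + B / c := by
    intro c hc
    have htail := sqrt_mul_mul_sum_filter_choose_le ha t c
    refine (sum_pow_mul_le_mul_add_mul (by linarith) hc.le hx0 hx).trans (add_le_add_right ?_ _)
    rw [le_div_iff₀ hc, le_div_iff₀ (sqrt_pos.2 ht0)]
    calc _ = σ * (√t * (c * ∑ j ∈ range (t + 1) with c < a ^ j, (t.choose j : ℝ) * a ^ j)) := by
          ring
      _ ≤ σ * (4 * a ^ 2 * (1 + a ^ 2) ^ t) := by gcongr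
  refine (le_two_mul_sqrt_mul_of_forall_le (by positivity) hm hsplit).trans_eq ?_
  have hroot : (t : ℝ) ^ ((1 : ℝ) / 4) = √(√t) := by
    rw [sqrt_eq_rpow, sqrt_eq_rpow, ← rpow_mul ht0.le]; norm_num
  have hBm : B * m = (2 * a) ^ 2 * (σ * (1 + a ^ 2) ^ t) * m / √t := by ring
  rw [hroot, hBm, sqrt_div' _ (sqrt_nonneg _), sqrt_mul (by positivity), sqrt_mul (by positivity),
    sqrt_sq (by linarith)]
  ring

theorem forall_mem_of_sum_card_fiber_eq {ι κ : Type*} [Fintype ι] [DecidableEq κ] {z : ι → κ}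
    {P : Finset κ} (h : ∑ y ∈ P, #{i | z i = y} = Fintype.card ι) (i : ι) : z i ∈ P := by
  rw [sum_card_fiberwise_eq_card_filter] at h
  have hi : i ∈ ({i | z i ∈ P} : Finset ι) := by rw [eq_univ_of_card _ h]; exact mem_univ i
  exact (mem_filter.1 hi).2

section Levels

variable {ι : Type*} [Fintype ι] {a : ℝ} {t : ℕ} {z : EuclideanSpace ℝ ι}

theorem sum_eq_sum_range_sum_filter_pow (ha : 1 < a)
    (hz : ∀ i, z i ∈ (range (t + 1)).image (a ^ ·)) (f : ι → ℝ) :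
    ∑ i, f i = ∑ j ∈ range (t + 1), ∑ i with z i = a ^ j, f i := by
  rw [← sum_fiberwise_of_maps_to (fun i _ => hz i),
    sum_image (pow_right_strictMono₀ ha).injective.injOn]

theorem inner_eq_sum_range_pow_mul (ha : 1 < a) (hz : ∀ i, z i ∈ (range (t + 1)).image (a ^ ·))
    (δ : EuclideanSpace ℝ ι) :
    ⟪z, δ⟫ = ∑ j ∈ range (t + 1), a ^ j * ∑ i with z i = a ^ j, δ i := by
  rw [PiLp.inner_apply, sum_eq_sum_range_sum_filter_pow ha hz]
  refine sum_congr rfl fun j _ => ?_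
  rw [mul_sum]
  refine sum_congr rfl fun i hi => ?_
  rw [(mem_filter.1 hi).2, RCLike.inner_apply, conj_trivial, mul_comm]

theorem norm_eq_sqrt_of_card_level (ha : 1 < a) (hz : ∀ i, z i ∈ (range (t + 1)).image (a ^ ·))
    {σ : ℕ} (hcard : ∀ j ≤ t, #{i | z i = a ^ j} = t.choose j * σ) :
    ‖z‖ = √(σ * (1 + a ^ 2) ^ t) := by
  rw [EuclideanSpace.norm_eq, sum_eq_sum_range_sum_filter_pow ha hz, ← sum_range_choose_mul_pow,
    mul_sum]
  congr 1
  refine sum_congr rfl fun j hj => ?_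
  rw [sum_congr rfl fun i hi => by rw [(mem_filter.1 hi).2, Real.norm_eq_abs, sq_abs],
    sum_const, hcard j (Nat.lt_succ_iff.1 (mem_range.1 hj))]
  ring

end Levels

theorem EuclideanSpace.norm_eq_sqrt_sum_of_forall_eq_zero_or_eq_one {ι : Type*} [Fintype ι]
    {δ : EuclideanSpace ℝ ι} (hδ : ∀ i, δ i = 0 ∨ δ i = 1) : ‖δ‖ = √(∑ i, δ i) := by
  rw [EuclideanSpace.norm_eq]
  congr 1
  refine sum_congr rfl fun i _ => ?_
  rcases hδ i with h | h <;> simp [h]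

/-- Lemma 8: for real `λ ≥ 4`, integers `s, t ≥ 1`, `n = (2s)^t`, and `z ∈ ℝⁿ` having
exactly `C(t,j)·s^t` coordinates equal to `λ^j` for each `0 ≤ j ≤ t`, every
`δ ∈ {0,1}ⁿ` satisfies `⟨z,δ⟩ ≤ (4λ/t^{1/4})·‖z‖·‖δ‖`. -/
theorem statement16 (lam : ℝ) (hlam : 4 ≤ lam) (s t : ℕ) (hs : 1 ≤ s) (ht : 1 ≤ t)
    (n : ℕ) (hn : n = (2 * s) ^ t) (z : EuclideanSpace ℝ (Fin n))
    (hz : ∀ j ≤ t, {i : Fin n | z i = lam ^ j}.ncard = t.choose j * s ^ t)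
    (δ : EuclideanSpace ℝ (Fin n)) (hδ : ∀ i, δ i = 0 ∨ δ i = 1) :
    ⟪z, δ⟫ ≤ (4 * lam / (t : ℝ) ^ ((1 : ℝ) / 4)) * (‖z‖ * ‖δ‖) := by
  have ha : 1 < lam := by linarith
  have hcard : ∀ j ≤ t, #{i | z i = lam ^ j} = t.choose j * s ^ t := fun j hj => by
    simpa [Set.ncard_eq_toFinset_card'] using hz j hj
  have hcover : ∀ i, z i ∈ (range (t + 1)).image (lam ^ ·) := by
    refine forall_mem_of_sum_card_fiber_eq ?_
    rw [sum_image (pow_right_strictMono₀ ha).injective.injOn,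
      sum_congr rfl fun j hj => hcard j (Nat.lt_succ_iff.1 (mem_range.1 hj)), ← sum_mul,
      Nat.sum_range_choose, Fintype.card_fin, hn, mul_pow]
  rw [inner_eq_sum_range_pow_mul ha hcover, norm_eq_sqrt_of_card_level ha hcover hcard,
    EuclideanSpace.norm_eq_sqrt_sum_of_forall_eq_zero_or_eq_one hδ,
    sum_eq_sum_range_sum_filter_pow ha hcover]
  have hδ01 : ∀ i, 0 ≤ δ i ∧ δ i ≤ 1 := fun i => by rcases hδ i with h | h <;> simp [h]
  refine sum_pow_mul_le_of_le_choose_mul hlam (by exact_mod_cast Nat.pow_pos hs) ht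
    (fun j => sum_nonneg fun i _ => (hδ01 i).1) fun j hj => ?_
  calc ∑ i with z i = lam ^ j, δ i ≤ ∑ i with z i = lam ^ j, (1 : ℝ) :=
        sum_le_sum fun i _ => (hδ01 i).2
    _ = t.choose j * ((s ^ t : ℕ) : ℝ) := by rw [sum_const, hcard j hj]; push_cast; ring
end
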